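/- arXiv:0707.1095 — 3 statements merged into one kernel-verified Lean document; each statement's English description precedes it below -/
import Mathlib

section
/- Let D be an oriented graph of order n in which every vertex has in-degree exactly 2 and which has an out-branching. If D has no out-tree with k leaves, then n ≤ 4k³. -/
open Relation

/-- `T` is an out-branching (spanning out-tree) of the digraph `A` rooted at `r`. -/
def IsOutBranching {V : Type*} (A : V → V → Prop) (r : V) (T : V → V → Prop) : Prop :=
  (∀ u v, T u v → A u v) ∧
  (∀ u, ¬ T u r) ∧
  (∀ v, v ≠ r → ∃! u, T u v) ∧
  (∀ v, Relation.ReflTransGen T r v)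

/-- Number of leaves (out-degree zero vertices) of a spanning tree relation `T`. -/
noncomputable def leavesCount {V : Type*} (T : V → V → Prop) : ℕ :=
  {v : V | ∀ u, ¬ T v u}.ncard

/-- `T` is an out-tree of digraph `A` on vertex set `S`, rooted at `r`. -/
def IsOutTree {V : Type*} (A : V → V → Prop) (S : Set V) (r : V) (T : V → V → Prop) : Prop :=
  r ∈ S ∧
  (∀ u v, T u v → A u v ∧ u ∈ S ∧ v ∈ S) ∧
  (∀ u, ¬ T u r) ∧
  (∀ v ∈ S, v ≠ r → ∃! u, T u v) ∧
  (∀ v ∈ S, Relation.ReflTransGen T r v)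

/-- Number of leaves of an out-tree with vertex set `S` and arc relation `T`. -/
noncomputable def treeLeaves {V : Type*} (S : Set V) (T : V → V → Prop) : ℕ :=
  {v : V | v ∈ S ∧ ∀ u, ¬ T v u}.ncard

/-- A rooted (directed) tree on the whole vertex type. -/
def IsRootedTree {V : Type*} (T : V → V → Prop) (r : V) : Prop :=
  (∀ u, ¬ T u r) ∧
  (∀ v, v ≠ r → ∃! u, T u v) ∧
  (∀ v, Relation.ReflTransGen T r v)

/-- Out-degree of a vertex in a digraph/tree relation. -/
noncomputable def outDeg {V : Type*} (T : V → V → Prop) (v : V) : ℕ :=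
  {u : V | T v u}.ncard

/-- The underlying undirected simple graph of a digraph. -/
def UN {V : Type*} (A : V → V → Prop) : SimpleGraph V where
  Adj u v := u ≠ v ∧ (A u v ∨ A v u)
  symm := ⟨fun u v h => ⟨Ne.symm h.1, h.2.symm⟩⟩
  loopless := ⟨fun v h => h.1 rfl⟩

/-- The pathwidth of `G` is at most `w`: there is a path decomposition of width `≤ w`. -/
def pwLE {V : Type*} (G : SimpleGraph V) (w : ℕ) : Prop :=
  ∃ (s : ℕ) (X : Fin s → Finset V),
    (∀ v, ∃ i, v ∈ X i) ∧
    (∀ u v, G.Adj u v → ∃ i, u ∈ X i ∧ v ∈ X i) ∧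
    (∀ i j k : Fin s, i ≤ j → j ≤ k → ∀ v, v ∈ X i → v ∈ X k → v ∈ X j) ∧
    (∀ i, (X i).card ≤ w + 1)

/-- The strong component of the vertex `v` in digraph `A`. -/
def strongComp {V : Type*} (A : V → V → Prop) (v : V) : Set V :=
  {u : V | Relation.ReflTransGen A u v ∧ Relation.ReflTransGen A v u}

/-- Maximum number of leaves over all out-trees of `A` (ℓ(D)). -/
noncomputable def maxLeafOT {V : Type*} (A : V → V → Prop) : ℕ :=
  sSup {l : ℕ | ∃ (S : Set V) (r : V) (T : V → V → Prop), IsOutTree A S r T ∧ treeLeaves S T = l}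

/-- Maximum number of leaves over all out-branchings of `A` (ℓ_s(D)), `0` if none exists. -/
noncomputable def maxLeafOB {V : Type*} (A : V → V → Prop) : ℕ :=
  sSup {l : ℕ | ∃ (r : V) (T : V → V → Prop), IsOutBranching A r T ∧ leavesCount T = l}

/-- `T` is a 1-arc-exchange optimal out-branching of `A` rooted at `r`. -/
def OneAEOptimal {V : Type*} (A : V → V → Prop) (r : V) (T : V → V → Prop) : Prop :=
  IsOutBranching A r T ∧
  ∀ f x : V × V, T f.1 f.2 → A x.1 x.2 → ¬ T x.1 x.2 →
    IsOutBranching A r (fun a b => (T a b ∧ (a, b) ≠ f) ∨ (a, b) = x) →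
    leavesCount (fun a b => (T a b ∧ (a, b) ≠ f) ∨ (a, b) = x) ≤ leavesCount T

/-- Vertex separation of `G` is at most `k`, witnessed by some linear ordering. -/
def vsLE {V : Type*} [Fintype V] (G : SimpleGraph V) (k : ℕ) : Prop :=
  ∃ σ : Fin (Fintype.card V) ≃ V,
    ∀ j : Fin (Fintype.card V),
      {i : Fin (Fintype.card V) | i ≤ j ∧ ∃ i', j < i' ∧ G.Adj (σ i) (σ i')}.ncard ≤ k


/-!
Fix an out-branching `T` of `D`, rooted at `r`, with the maximum number `ℓ` of leaves; as an
out-tree, it has `ℓ < k`. Each `v ≠ r` has a second in-neighbour `s v` besides its parent in `T`.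
When `s v` is a descendant of `v`, follow the arc back to `s v`, which lies at least two levels
deeper because `D` has no 2-cycles. These steps split `V - r` into descent trees, which are
out-trees of `D`, each rooted at a vertex `x` where the step stops. A chain of `t` steps, with the
first tree arc below each of its vertices as a leg, is a caterpillar with `t` leaves. So every
vertex of a descent tree lies fewer than `k` steps above one of its leaves, and a descent tree
with `λ` leaves has at most `k λ` vertices.

If the parent of `x` in `T` has other children, there are at most `2 (ℓ - 1)` such roots, and
each tree has fewer than `k` leaves. Otherwise exchanging the two arcs into `x` would gain a leaf
of `T` unless `s x` is a leaf of `T`, and the trees whose roots share such a second parent `w`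
hang below `w` as one out-tree with fewer than `k` leaves. Hence
`n ≤ 1 + k (k - 1) (3 ℓ - 2) ≤ 4 k³`.
-/

section

variable {V : Type*}

def OutTreeLeavesLT (A : V → V → Prop) (k : ℕ) : Prop :=
  ∀ (S : Set V) (r : V) (T : V → V → Prop), IsOutTree A S r T → treeLeaves S T < k

def parentTree (S : Set V) (x : V) (p : V → V) (a b : V) : Prop :=
  b ∈ S ∧ b ≠ x ∧ a = p b

section ParentTree

variable {A : V → V → Prop} {S : Set V} {x : V} {p : V → V}

theorem isOutTree_parentTree (μ : V → ℕ) (hx : x ∈ S)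
    (hp : ∀ v ∈ S, v ≠ x → p v ∈ S ∧ A (p v) v ∧ μ (p v) < μ v) :
    IsOutTree A S x (parentTree S x p) := by
  have reach : ∀ n, ∀ v ∈ S, μ v < n → ReflTransGen (parentTree S x p) x v := by
    intro n
    induction n with
    | zero => intro v _ h; omega
    | succ n ih =>
      intro v hv hμ
      by_cases hvx : v = x
      · exact hvx ▸ .refl
      · obtain ⟨hpS, -, hlt⟩ := hp v hv hvx
        exact (ih (p v) hpS (by omega)).tail ⟨hv, hvx, rfl⟩
  refine ⟨hx, ?_, ?_, ?_, fun v hv => reach _ v hv (Nat.lt_succ_self _)⟩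
  · rintro _ v ⟨hv, hvx, rfl⟩
    exact ⟨(hp v hv hvx).2.1, (hp v hv hvx).1, hv⟩
  · rintro _ ⟨-, hxx, -⟩
    exact hxx rfl
  · intro v hv hvx
    exact ⟨p v, ⟨hv, hvx, rfl⟩, fun _ hu => hu.2.2⟩

theorem ncard_lt_of_parentTree [Finite V] {k : ℕ} (hno : OutTreeLeavesLT A k) (μ : V → ℕ)
    (hx : x ∈ S) (hp : ∀ v ∈ S, v ≠ x → p v ∈ S ∧ A (p v) v ∧ μ (p v) < μ v)
    {W : Set V} (hWS : W ⊆ S) (hW : ∀ b ∈ S, b ≠ x → p b ∉ W) : W.ncard < k :=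
  calc W.ncard ≤ treeLeaves S (parentTree S x p) :=
        Set.ncard_le_ncard fun w hw =>
          ⟨hWS hw, fun b ⟨hb, hbx, hwb⟩ => hW b hb hbx (hwb ▸ hw)⟩
    _ < k := hno _ _ _ (isOutTree_parentTree μ hx hp)


end ParentTree

section Caterpillar

variable {ρ : V → ℕ} {u c : ℕ → V} {t : ℕ}
  (hρ : ∀ i ≤ t, ρ (u i) < ρ (c i) ∧ ρ (c i) < ρ (u (i + 1)))
include hρ

theorem rank_leg_lt_rank_spine {i j : ℕ} (hij : i < j) (hj : j ≤ t + 1) : ρ (c i) < ρ (u j) := by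
  induction j, hij using Nat.le_induction with
  | base => exact (hρ i (by omega)).2
  | succ j _ ih =>
    have := hρ j (by omega)
    have := ih (by omega)
    omega

theorem rank_spine_le_rank_top {j : ℕ} (hj : j ≤ t + 1) : ρ (u j) ≤ ρ (u (t + 1)) := by
  rcases hj.lt_or_eq with hj | rfl
  · exact ((hρ j (by omega)).1.trans (rank_leg_lt_rank_spine hρ hj le_rfl)).le
  · exact le_rfl

theorem leg_ne_spine {i j : ℕ} (hi : i ≤ t) (hj : j ≤ t + 1) : c i ≠ u j := by
  intro he
  rcases lt_or_ge i j with h | h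
  · exact (rank_leg_lt_rank_spine hρ h hj).ne (he ▸ rfl)
  · have := hρ i hi
    have : ρ (u j) ≤ ρ (u i) := by
      rcases h.lt_or_eq with h | rfl
      · exact ((hρ j (by omega)).1.trans (rank_leg_lt_rank_spine hρ h (by omega))).le
      · exact le_rfl
    rw [he] at *
    omega

theorem injOn_legs : Set.InjOn c (Set.Iic t) := by
  have key : ∀ i j, i < j → j ≤ t → c i ≠ c j := fun i j hij hj he =>
    (rank_leg_lt_rank_spine hρ hij (by omega)).not_ge (he ▸ (hρ j hj).1.le)
  intro i hi j hj he
  rcases lt_trichotomy i j with h | h | h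
  exacts [absurd he (key i j h hj), h, absurd he.symm (key j i h hi)]

/-- A spine `u (t + 1) → u t → ⋯ → u 0` with a leg `u i → c i` at each `i ≤ t` is an out-tree
whose legs are `t + 1` distinct leaves; `f` and `g` recover the parents of spine and leg
vertices. -/
theorem succ_lt_of_caterpillar [Finite V] {A : V → V → Prop} {k : ℕ} (hno : OutTreeLeavesLT A k)
    (f g : V → V) (hu : ∀ i ≤ t, f (u i) = u (i + 1) ∧ A (u (i + 1)) (u i))
    (hc : ∀ i ≤ t, g (c i) = u i ∧ A (u i) (c i)) : t + 1 < k := by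
  classical
  set C := c '' Set.Iic t
  have hc_mem : ∀ i ≤ t, c i ∈ C := fun i hi => Set.mem_image_of_mem c (Set.mem_Iic.mpr hi)
  have hu_notMem : ∀ j ≤ t + 1, u j ∉ C := fun j hj ⟨i, hi, he⟩ => leg_ne_spine hρ hi hj he
  let μ : V → ℕ := fun v =>
    if v ∈ C then 2 * (ρ (u (t + 1)) - ρ (g v)) + 1 else 2 * (ρ (u (t + 1)) - ρ v)
  have hleg := ncard_lt_of_parentTree hno μ (S := insert (u (t + 1)) ({v | ∃ j ≤ t, u j = v} ∪ C))
    (p := fun v => if v ∈ C then g v else f v) (Set.mem_insert _ _) ?_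
    ((Set.subset_union_right).trans (Set.subset_insert _ _)) ?_
  · rwa [(injOn_legs hρ).ncard_image, Set.ncard_eq_toFinset_card' (Set.Iic t),
      Set.toFinset_Iic, Nat.card_Iic] at hleg
  · rintro v (rfl | ⟨j, hj, rfl⟩ | ⟨i, hi, rfl⟩) hv
    · exact absurd rfl hv
    · have := hρ j hj
      have := rank_spine_le_rank_top hρ (j := j + 1) (by omega)
      simp only [μ, if_neg (hu_notMem j (by omega)), if_neg (hu_notMem (j + 1) (by omega)),
        (hu j hj).1]
      refine ⟨?_, (hu j hj).2, by omega⟩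
      rcases (Nat.lt_or_ge j t) with h | h
      · exact Or.inr (Or.inl ⟨j + 1, h, rfl⟩)
      · exact Or.inl (by rw [show j = t by omega])
    · rw [Set.mem_Iic] at hi
      simp only [μ, if_pos (hc_mem i hi), if_neg (hu_notMem i (by omega)), (hc i hi).1]
      exact ⟨Or.inr (Or.inl ⟨i, hi, rfl⟩), (hc i hi).2, by omega⟩
  · rintro b (rfl | ⟨j, hj, rfl⟩ | ⟨i, hi, rfl⟩) hb
    · exact absurd rfl hb
    · simp only [if_neg (hu_notMem j (by omega)), (hu j hj).1]
      exact hu_notMem (j + 1) (by omega)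
    · rw [Set.mem_Iic] at hi
      simp only [if_pos (hc_mem i hi), (hc i hi).1]
      exact hu_notMem i (by omega)

end Caterpillar

open Classical in
noncomputable def treeParent (T : V → V → Prop) (v : V) : V :=
  if h : ∃ u, T u v then h.choose else v

/-- `0` when the iterates of `treeParent T` never reach `r`. -/
noncomputable def treeDepth (T : V → V → Prop) (r v : V) : ℕ :=
  sInf {m | (treeParent T)^[m] v = r}

theorem treeDepth_le_of_iterate {T : V → V → Prop} {r v : V} {m : ℕ}
    (hm : (treeParent T)^[m] v = r) : treeDepth T r v ≤ m :=
  Nat.sInf_le hm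

namespace IsRootedTree

variable {T : V → V → Prop} {r u v : V}

theorem ne_root_of_rel (hT : IsRootedTree T r) (h : T u v) : v ≠ r :=
  fun e => hT.1 u (e ▸ h)

theorem rel_treeParent (hT : IsRootedTree T r) (hv : v ≠ r) : T (treeParent T v) v := by
  have h : ∃ u, T u v := (hT.2.1 v hv).exists
  rw [treeParent, dif_pos h]
  exact h.choose_spec

theorem eq_treeParent (hT : IsRootedTree T r) (h : T u v) : u = treeParent T v :=
  (hT.2.1 v (hT.ne_root_of_rel h)).unique h (hT.rel_treeParent (hT.ne_root_of_rel h))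

theorem exists_iterate_treeParent_eq_root (hT : IsRootedTree T r) (v : V) :
    ∃ m, (treeParent T)^[m] v = r := by
  induction hT.2.2 v with
  | refl => exact ⟨0, rfl⟩
  | tail _ huv ih =>
    obtain ⟨m, hm⟩ := ih
    exact ⟨m + 1, by rwa [Function.iterate_succ_apply, ← hT.eq_treeParent huv]⟩

theorem iterate_treeDepth (hT : IsRootedTree T r) (v : V) :
    (treeParent T)^[treeDepth T r v] v = r :=
  Nat.sInf_mem (hT.exists_iterate_treeParent_eq_root v)

theorem treeDepth_treeParent (hT : IsRootedTree T r) (hv : v ≠ r) :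
    treeDepth T r v = treeDepth T r (treeParent T v) + 1 := by
  obtain ⟨d, hd⟩ : ∃ d, treeDepth T r v = d + 1 :=
    Nat.exists_eq_succ_of_ne_zero fun h => hv (by simpa [h] using hT.iterate_treeDepth v)
  refine le_antisymm (treeDepth_le_of_iterate ?_) ?_
  · rw [Function.iterate_succ_apply]
    exact hT.iterate_treeDepth _
  · have := hT.iterate_treeDepth v
    rw [hd, Function.iterate_succ_apply] at this
    have := treeDepth_le_of_iterate this
    omega

theorem treeDepth_of_rel (hT : IsRootedTree T r) (h : T u v) :
    treeDepth T r v = treeDepth T r u + 1 := by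
  rw [hT.treeDepth_treeParent (hT.ne_root_of_rel h), ← hT.eq_treeParent h]

theorem treeDepth_le_of_reflTransGen (hT : IsRootedTree T r) (h : ReflTransGen T u v) :
    treeDepth T r u ≤ treeDepth T r v := by
  induction h with
  | refl => exact le_rfl
  | tail _ hbc ih => rw [hT.treeDepth_of_rel hbc]; omega

theorem treeDepth_lt_of_reflTransGen (hT : IsRootedTree T r) (h : ReflTransGen T u v)
    (hne : u ≠ v) : treeDepth T r u < treeDepth T r v := by
  obtain ⟨w, huw, hwv⟩ := (h.cases_head.resolve_left hne)
  have := hT.treeDepth_le_of_reflTransGen hwv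
  rw [hT.treeDepth_of_rel huw] at this
  omega

/-- If two iterates up to the depth coincided, the root would be reached earlier. -/
theorem treeDepth_lt_card [Fintype V] (hT : IsRootedTree T r) (v : V) :
    treeDepth T r v < Fintype.card V := by
  set d := treeDepth T r v
  have key : ∀ i j, i < j → j ≤ d → (treeParent T)^[i] v ≠ (treeParent T)^[j] v := by
    intro i j hij hj he
    have hroot : (treeParent T)^[d - (j - i)] v = r := by
      rw [show d - (j - i) = (d - j) + i by omega, Function.iterate_add_apply, he,
        ← Function.iterate_add_apply, show d - j + j = d by omega]
      exact hT.iterate_treeDepth v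
    have := treeDepth_le_of_iterate hroot
    omega
  have hinj : Set.InjOn (fun i => (treeParent T)^[i] v) (Finset.range (d + 1)) := by
    intro i hi j hj hij
    simp only [Finset.coe_range, Set.mem_Iio] at hi hj
    rcases lt_trichotomy i j with h | h | h
    · exact absurd hij (key i j h (by omega))
    · exact h
    · exact absurd hij.symm (key j i h (by omega))
  simpa using Finset.card_le_card_of_injOn _ (fun i _ => Finset.mem_univ _) hinj

end IsRootedTree

section OutDegree

open Finset

variable [Fintype V] {T : V → V → Prop} {r : V}

theorem outDeg_eq_card [DecidableRel T] (v : V) : outDeg T v = #{u | T v u} := by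
  rw [outDeg, ← Set.ncard_coe_finset]
  congr 1
  ext
  simp

theorem outDeg_eq_zero_iff {v : V} : outDeg T v = 0 ↔ ∀ u, ¬ T v u := by
  rw [outDeg, Set.ncard_eq_zero, Set.eq_empty_iff_forall_notMem]
  rfl

theorem leavesCount_eq_card [DecidableRel T] : leavesCount T = #{v | outDeg T v = 0} := by
  rw [leavesCount, ← Set.ncard_coe_finset]
  congr 1
  ext v
  simp [outDeg_eq_zero_iff]

namespace IsRootedTree

theorem sum_outDeg_add_one (hT : IsRootedTree T r) : ∑ v, outDeg T v + 1 = Fintype.card V := by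
  classical
  have hin : ∀ u, #{v | T v u} = if u = r then 0 else 1 := by
    intro u
    split_ifs with hu
    · exact card_eq_zero.mpr (filter_eq_empty_iff.mpr fun v _ => hu ▸ hT.1 v)
    · rw [card_eq_one]
      exact ⟨treeParent T u, by ext v; simpa using ⟨hT.eq_treeParent, (· ▸ hT.rel_treeParent hu)⟩⟩
  have := sum_card_bipartiteAbove_eq_sum_card_bipartiteBelow T (s := univ) (t := univ)
  simp only [bipartiteAbove, bipartiteBelow, ← outDeg_eq_card, hin] at this
  rw [this, ← Finset.add_sum_erase _ _ (mem_univ r), if_pos rfl, zero_add,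
    sum_congr rfl fun u hu => if_neg (ne_of_mem_erase hu), sum_const, smul_eq_mul, mul_one,
    card_erase_of_mem (mem_univ r), card_univ, Nat.sub_add_cancel (Fintype.card_pos_iff.mpr ⟨r⟩)]

theorem sum_outDeg_sub_one (hT : IsRootedTree T r) :
    ∑ v, (outDeg T v - 1) = leavesCount T - 1 := by
  classical
  have hpoint : ∀ v, outDeg T v - 1 + 1 = outDeg T v + if outDeg T v = 0 then 1 else 0 := by
    intro v
    split_ifs <;> omega
  have hsum := sum_congr rfl fun v (_ : v ∈ univ) => hpoint v
  simp only [sum_add_distrib, sum_const, card_univ, smul_eq_mul, mul_one, sum_boole,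
    Nat.cast_id, ← leavesCount_eq_card] at hsum
  have := hT.sum_outDeg_add_one
  omega

theorem card_outDeg_treeParent_ne_one_le [DecidableEq V] (hT : IsRootedTree T r) :
    #{v | v ≠ r ∧ outDeg T (treeParent T v) ≠ 1} ≤ 2 * (leavesCount T - 1) := by
  classical
  calc #{v | v ≠ r ∧ outDeg T (treeParent T v) ≠ 1}
      ≤ #(({u | 2 ≤ outDeg T u} : Finset V).biUnion fun u => {v | T u v}) := by
        refine card_le_card fun v hv => ?_
        simp only [mem_filter, mem_univ, true_and] at hv
        have hpos : outDeg T (treeParent T v) ≠ 0 := by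
          rw [outDeg_eq_card]
          exact (card_pos.mpr ⟨v, by simpa using hT.rel_treeParent hv.1⟩).ne'
        simp only [mem_biUnion, mem_filter, mem_univ, true_and]
        exact ⟨treeParent T v, by omega, hT.rel_treeParent hv.1⟩
    _ ≤ ∑ u with 2 ≤ outDeg T u, outDeg T u := by
        simpa only [outDeg_eq_card] using card_biUnion_le
    _ ≤ ∑ u, 2 * (outDeg T u - 1) :=
        (sum_le_sum fun u hu => by simp at hu; omega).trans
          (sum_le_sum_of_subset (filter_subset _ _))
    _ = 2 * (leavesCount T - 1) := by rw [← mul_sum, hT.sum_outDeg_sub_one]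

end IsRootedTree

end OutDegree

theorem exists_isOutBranching_forall_leavesCount_le [Finite V] {A : V → V → Prop}
    (h : ∃ r T, IsOutBranching A r T) :
    ∃ r T, IsOutBranching A r T ∧
      ∀ r' T', IsOutBranching A r' T' → leavesCount T' ≤ leavesCount T := by
  obtain ⟨r, T, hT⟩ := h
  have : Nonempty {q : V × (V → V → Prop) // IsOutBranching A q.1 q.2} := ⟨⟨(r, T), hT⟩⟩
  obtain ⟨⟨⟨r, T⟩, hT⟩, hmax⟩ :=
    Finite.exists_max fun q : {q : V × (V → V → Prop) // IsOutBranching A q.1 q.2} =>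
      leavesCount q.1.2
  exact ⟨r, T, hT, fun r' T' hT' => hmax ⟨(r', T'), hT'⟩⟩

def arcExchange (T : V → V → Prop) (f e : V × V) (a b : V) : Prop :=
  (T a b ∧ (a, b) ≠ f) ∨ (a, b) = e

theorem leavesCount_lt_arcExchange [Finite V] {T : V → V → Prop} {p y v : V} (hpv : T p v)
    (hp : outDeg T p = 1) (hy : ∃ u, T y u) (hyp : y ≠ p) :
    leavesCount T < leavesCount (arcExchange T (p, v) (y, v)) := by
  have hchild : ∀ u, T p u → u = v := by
    obtain ⟨a, ha⟩ := Set.ncard_eq_one.mp hp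
    have hv : v ∈ {u | T p u} := hpv
    intro u hu
    have hu : u ∈ {u | T p u} := hu
    rw [ha] at hu hv
    exact hu.trans hv.symm
  have hsub : insert p {w | ∀ u, ¬ T w u} ⊆ {w | ∀ u, ¬ arcExchange T (p, v) (y, v) w u} := by
    rintro w (rfl | hw) u (⟨hwu, hne⟩ | he)
    · exact hne (by rw [hchild u hwu])
    · exact hyp (Prod.ext_iff.mp he).1.symm
    · exact hw u hwu
    · obtain ⟨rfl, -⟩ := Prod.ext_iff.mp he
      obtain ⟨u', hu'⟩ := hy
      exact hw u' hu'
  have hp_notMem : p ∉ {w | ∀ u, ¬ T w u} := fun h => h v hpv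
  calc leavesCount T < (insert p {w | ∀ u, ¬ T w u}).ncard := by
        rw [Set.ncard_insert_of_notMem hp_notMem]
        exact Nat.lt_succ_self _
    _ ≤ _ := Set.ncard_le_ncard hsub

namespace IsOutBranching

variable {A T : V → V → Prop} {r : V}

theorem isRootedTree (hT : IsOutBranching A r T) : IsRootedTree T r := hT.2

theorem leavesCount_lt {k : ℕ} (hT : IsOutBranching A r T) (hno : OutTreeLeavesLT A k) :
    leavesCount T < k := by
  have htree : IsOutTree A Set.univ r T :=
    ⟨trivial, fun u v h => ⟨hT.1 u v h, trivial, trivial⟩, hT.2.1, fun v _ => hT.2.2.1 v,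
      fun v _ => hT.2.2.2 v⟩
  simpa [treeLeaves, leavesCount] using hno _ _ _ htree

/-- The subtree of `v` is still reached through `v`, and everything else along the old paths. -/
theorem reflTransGen_arcExchange {p y v : V} (hT : IsOutBranching A r T) (hpv : T p v)
    (hvy : ¬ ReflTransGen T v y) (b : V) : ReflTransGen (arcExchange T (p, v) (y, v)) r b := by
  have outside : ∀ b, ReflTransGen T r b → ¬ ReflTransGen T v b →
      ReflTransGen (arcExchange T (p, v) (y, v)) r b := by
    intro b hb
    induction hb with
    | refl => exact fun _ => .refl
    | @tail c d _ hcd ih =>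
      intro hvd
      refine (ih fun hvc => hvd (hvc.tail hcd)).tail (Or.inl ⟨hcd, fun e => hvd ?_⟩)
      obtain ⟨-, rfl⟩ := Prod.ext_iff.mp e
      exact .refl
  have inside : ∀ b, ReflTransGen T v b → ReflTransGen (arcExchange T (p, v) (y, v)) v b := by
    intro b hb
    induction hb with
    | refl => exact .refl
    | @tail c d hvc hcd ih =>
      refine ih.tail (Or.inl ⟨hcd, fun e => ?_⟩)
      obtain ⟨rfl, rfl⟩ := Prod.ext_iff.mp e
      have := hT.isRootedTree.treeDepth_le_of_reflTransGen hvc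
      rw [hT.isRootedTree.treeDepth_of_rel hcd] at this
      omega
  by_cases hvb : ReflTransGen T v b
  · exact ((outside y (hT.2.2.2 y) hvy).tail (Or.inr rfl)).trans (inside b hvb)
  · exact outside b (hT.2.2.2 b) hvb

theorem exchange {p y v : V} (hT : IsOutBranching A r T) (hpv : T p v) (hyv : A y v)
    (hvy : ¬ ReflTransGen T v y) : IsOutBranching A r (arcExchange T (p, v) (y, v)) := by
  refine ⟨?_, ?_, fun b hb => ?_, hT.reflTransGen_arcExchange hpv hvy⟩
  · rintro a b (⟨h, -⟩ | h)
    · exact hT.1 a b h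
    · obtain ⟨rfl, rfl⟩ := Prod.ext_iff.mp h
      exact hyv
  · rintro u (⟨h, -⟩ | h)
    · exact hT.2.1 u h
    · exact hT.isRootedTree.ne_root_of_rel hpv (Prod.ext_iff.mp h).2.symm
  · by_cases hbv : b = v
    · subst hbv
      refine ⟨y, Or.inr rfl, ?_⟩
      rintro u (⟨h, hne⟩ | h)
      · exact absurd (by rw [hT.isRootedTree.eq_treeParent h, hT.isRootedTree.eq_treeParent hpv])
          hne
      · exact (Prod.ext_iff.mp h).1
    · refine ⟨treeParent T b, Or.inl ⟨hT.isRootedTree.rel_treeParent hb, ?_⟩, ?_⟩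
      · exact fun e => hbv (Prod.ext_iff.mp e).2
      · rintro u (⟨h, -⟩ | h)
        · exact hT.isRootedTree.eq_treeParent h
        · exact absurd (Prod.ext_iff.mp h).2 hbv

end IsOutBranching

open Classical in
noncomputable def secondParent (A T : V → V → Prop) (v : V) : V :=
  if h : ∃ y, A y v ∧ y ≠ treeParent T v then h.choose else v

section SecondParent

variable {A T : V → V → Prop} {r v : V}

theorem secondParent_spec (hv : 2 ≤ {u | A u v}.ncard) :
    A (secondParent A T v) v ∧ secondParent A T v ≠ treeParent T v := by
  have h : ∃ y, A y v ∧ y ≠ treeParent T v :=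
    Set.exists_ne_of_one_lt_ncard (s := {u | A u v}) (by omega) (treeParent T v)
  rw [secondParent, dif_pos h]
  exact h.choose_spec

theorem secondParent_ne_self (hor : ∀ u v : V, A u v → ¬ A v u) (hv : 2 ≤ {u | A u v}.ncard) :
    secondParent A T v ≠ v := fun h => by
  have hA := (secondParent_spec (T := T) hv).1
  rw [h] at hA
  exact hor v v hA hA

/-- If it had a child, exchanging the two arcs into `v` would gain a leaf. -/
theorem IsOutBranching.secondParent_isLeaf [Finite V] (hT : IsOutBranching A r T)
    (hmax : ∀ r' T', IsOutBranching A r' T' → leavesCount T' ≤ leavesCount T)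
    (hdeg : 2 ≤ {u | A u v}.ncard) (hv : v ≠ r) (hout : outDeg T (treeParent T v) = 1)
    (hvy : ¬ ReflTransGen T v (secondParent A T v)) : ∀ u, ¬ T (secondParent A T v) u := by
  by_contra! hy
  have hpv := hT.isRootedTree.rel_treeParent hv
  have := hmax r _ (hT.exchange hpv (secondParent_spec hdeg).1 hvy)
  have := leavesCount_lt_arcExchange hpv hout hy (secondParent_spec hdeg).2
  omega

end SecondParent

theorem ncard_biUnion_finset [Finite V] {ι : Type*} (G : Finset ι) (s : ι → Set V)
    (h : (G : Set ι).PairwiseDisjoint s) : (⋃ i ∈ G, s i).ncard = ∑ i ∈ G, (s i).ncard := by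
  rw [← finsum_mem_coe_finset, ← G.finite_toSet.ncard_biUnion (fun _ _ => Set.toFinite _) h]
  simp

def HasBackArc (A : V → V → Prop) (r : V) (T : V → V → Prop) (v : V) : Prop :=
  v ≠ r ∧ ReflTransGen T v (secondParent A T v)

open Classical in
noncomputable def descentStep (A : V → V → Prop) (r : V) (T : V → V → Prop) (v : V) : V :=
  if HasBackArc A r T v then secondParent A T v else v

def descentRoots (A : V → V → Prop) (r : V) (T : V → V → Prop) : Set V :=
  {x | x ≠ r ∧ ¬ HasBackArc A r T x}

def descentTree (A : V → V → Prop) (r : V) (T : V → V → Prop) (x : V) : Set V :=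
  {v | v ≠ r ∧ ∃ n, (descentStep A r T)^[n] v = x}

def descentLeaves (A : V → V → Prop) (r : V) (T : V → V → Prop) (x : V) : Set V :=
  {u ∈ descentTree A r T x | ∀ b, HasBackArc A r T b → secondParent A T b ≠ u}

section Descent

open Finset

variable {A T : V → V → Prop} {r v x : V}

theorem descentStep_of_hasBackArc (h : HasBackArc A r T v) :
    descentStep A r T v = secondParent A T v := if_pos h

theorem descentStep_of_not_hasBackArc (h : ¬ HasBackArc A r T v) : descentStep A r T v = v :=
  if_neg h

theorem self_mem_descentTree (hx : x ∈ descentRoots A r T) : x ∈ descentTree A r T x :=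
  ⟨hx.1, 0, rfl⟩

theorem eq_of_mem_descentTree {y : V} (hx : x ∈ descentRoots A r T) (hy : y ∈ descentRoots A r T)
    (hvx : v ∈ descentTree A r T x) (hvy : v ∈ descentTree A r T y) : x = y := by
  obtain ⟨-, m, rfl⟩ := hvx
  obtain ⟨-, n, rfl⟩ := hvy
  rw [← Function.iterate_fixed (descentStep_of_not_hasBackArc hy.2) m,
    ← Function.iterate_fixed (descentStep_of_not_hasBackArc hx.2) n,
    ← Function.iterate_add_apply, ← Function.iterate_add_apply, add_comm]

theorem hasBackArc_of_mem_descentTree (hv : v ∈ descentTree A r T x) (hvx : v ≠ x) :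
    HasBackArc A r T v := by
  by_contra hb
  obtain ⟨-, n, hn⟩ := hv
  rw [Function.iterate_fixed (descentStep_of_not_hasBackArc hb)] at hn
  exact hvx hn

theorem notMem_descentTree_of_forall_not_rel (hor : ∀ u v : V, A u v → ¬ A v u)
    (hdeg : ∀ v, 2 ≤ {u | A u v}.ncard) {w : V} (hw : ∀ u, ¬ T w u)
    (hx : secondParent A T x = w) : w ∉ descentTree A r T x := by
  rintro ⟨-, n, hn⟩
  have hw_root : ¬ HasBackArc A r T w := fun hb => by
    obtain ⟨c, hwc, -⟩ := hb.2.cases_head.resolve_left (secondParent_ne_self hor (hdeg w)).symm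
    exact hw c hwc
  rw [Function.iterate_fixed (descentStep_of_not_hasBackArc hw_root)] at hn
  exact secondParent_ne_self hor (hdeg x) (hn ▸ hx)

variable (hT : IsOutBranching A r T) (hor : ∀ u v : V, A u v → ¬ A v u)
  (hdeg : ∀ v, 2 ≤ {u | A u v}.ncard)
include hT hor hdeg

/-- The first arc of the tree path from `v` down to its second parent does not end there,
as `D` has no 2-cycles. -/
theorem exists_rel_treeDepth_lt_secondParent (h : HasBackArc A r T v) :
    ∃ c, T v c ∧ treeDepth T r c < treeDepth T r (secondParent A T v) := by
  obtain ⟨c, hvc, hcy⟩ := h.2.cases_head.resolve_left (secondParent_ne_self hor (hdeg v)).symm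
  refine ⟨c, hvc, hT.isRootedTree.treeDepth_lt_of_reflTransGen hcy ?_⟩
  rintro rfl
  exact hor _ _ (secondParent_spec (hdeg v)).1 (hT.1 _ _ hvc)

theorem treeDepth_add_two_le_secondParent (h : HasBackArc A r T v) :
    treeDepth T r v + 2 ≤ treeDepth T r (secondParent A T v) := by
  obtain ⟨c, hvc, hlt⟩ := exists_rel_treeDepth_lt_secondParent hT hor hdeg h
  rw [hT.isRootedTree.treeDepth_of_rel hvc] at hlt
  omega

theorem secondParent_ne_root (h : HasBackArc A r T v) : secondParent A T v ≠ r := by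
  intro hr
  have := treeDepth_add_two_le_secondParent hT hor hdeg h
  rw [hr, show treeDepth T r r = 0 from Nat.le_zero.mp (treeDepth_le_of_iterate rfl)] at this
  omega

theorem secondParent_mem_descentTree
    (hx : x ∈ descentRoots A r T) (hv : v ∈ descentTree A r T x) (hb : HasBackArc A r T v) :
    secondParent A T v ∈ descentTree A r T x := by
  obtain ⟨-, n, hn⟩ := hv
  refine ⟨secondParent_ne_root hT hor hdeg hb, n - 1, ?_⟩
  obtain _ | n := n
  · exact absurd (hn ▸ hb) hx.2
  · rwa [Function.iterate_succ_apply, descentStep_of_hasBackArc hb] at hn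

theorem descentTree_parent_step
    (hx : x ∈ descentRoots A r T) (hv : v ∈ descentTree A r T x) (hvx : v ≠ x) :
    secondParent A T v ∈ descentTree A r T x ∧ A (secondParent A T v) v ∧
      treeDepth T r v + 2 ≤ treeDepth T r (secondParent A T v) :=
  have hb := hasBackArc_of_mem_descentTree hv hvx
  ⟨secondParent_mem_descentTree hT hor hdeg hx hv hb, (secondParent_spec (hdeg v)).1,
    treeDepth_add_two_le_secondParent hT hor hdeg hb⟩

variable [Fintype V] {k : ℕ}

theorem exists_mem_descentRoots_mem_descentTree (hv : v ≠ r) :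
    ∃ x ∈ descentRoots A r T, v ∈ descentTree A r T x := by
  induction hd : Fintype.card V - treeDepth T r v using Nat.strong_induction_on generalizing v with
  | _ d ih =>
    by_cases hb : HasBackArc A r T v
    · have hdep := treeDepth_add_two_le_secondParent hT hor hdeg hb
      have := hT.isRootedTree.treeDepth_lt_card v
      obtain ⟨x, hx, -, n, hn⟩ := ih _ (by omega) (secondParent_ne_root hT hor hdeg hb) rfl
      refine ⟨x, hx, hv, n + 1, ?_⟩
      rwa [Function.iterate_succ_apply, descentStep_of_hasBackArc hb]
    · exact ⟨v, ⟨hv, hb⟩, hv, 0, rfl⟩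

theorem exists_descentLeaves_iterate_eq (hv : v ∈ descentTree A r T x) :
    ∃ l ∈ descentLeaves A r T x, ∃ n, (descentStep A r T)^[n] l = v ∧
      ∀ i < n, HasBackArc A r T ((descentStep A r T)^[i] l) := by
  induction hd : treeDepth T r v using Nat.strong_induction_on generalizing v with
  | _ d ih =>
    by_cases hleaf : ∀ b, HasBackArc A r T b → secondParent A T b ≠ v
    · exact ⟨v, ⟨hv, hleaf⟩, 0, rfl, by simp⟩
    push Not at hleaf
    obtain ⟨b, hb, rfl⟩ := hleaf
    have hbx : b ∈ descentTree A r T x := by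
      obtain ⟨-, n, hn⟩ := hv
      exact ⟨hb.1, n + 1, by rwa [Function.iterate_succ_apply, descentStep_of_hasBackArc hb]⟩
    obtain ⟨l, hl, n, rfl, hchain⟩ :=
      ih _ (hd ▸ by have := treeDepth_add_two_le_secondParent hT hor hdeg hb; omega) hbx rfl
    refine ⟨l, hl, n + 1, by rw [Function.iterate_succ_apply', descentStep_of_hasBackArc hb],
      fun i hi => ?_⟩
    rcases Nat.lt_succ_iff_lt_or_eq.mp hi with hi | rfl
    exacts [hchain i hi, hb]

theorem ncard_descentLeaves_lt (hno : OutTreeLeavesLT A k) (hx : x ∈ descentRoots A r T) :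
    (descentLeaves A r T x).ncard < k := by
  refine ncard_lt_of_parentTree hno (fun v => Fintype.card V - treeDepth T r v)
    (self_mem_descentTree hx) (fun v hv hvx => ?_) (fun _ hl => hl.1)
    (fun b hb hbx hl => hl.2 b (hasBackArc_of_mem_descentTree hb hbx) rfl)
  obtain ⟨hmem, hA, hdep⟩ := descentTree_parent_step hT hor hdeg hx hv hvx
  have := hT.isRootedTree.treeDepth_lt_card (secondParent A T v)
  exact ⟨hmem, hA, by omega⟩

/-- A chain of `t + 1` back-arc steps is the spine of a caterpillar whose legs are the first
tree arcs towards the second parents. -/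
theorem succ_lt_of_forall_hasBackArc_iterate (hno : OutTreeLeavesLT A k) {t : ℕ}
    (hchain : ∀ i ≤ t, HasBackArc A r T ((descentStep A r T)^[i] v)) : t + 1 < k := by
  have hleg : ∀ i, ∃ c, i ≤ t → T ((descentStep A r T)^[i] v) c ∧
      treeDepth T r c < treeDepth T r (secondParent A T ((descentStep A r T)^[i] v)) := by
    intro i
    by_cases hi : i ≤ t
    · obtain ⟨c, hc⟩ := exists_rel_treeDepth_lt_secondParent hT hor hdeg (hchain i hi)
      exact ⟨c, fun _ => hc⟩
    · exact ⟨v, fun h => absurd h hi⟩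
  choose c hc using hleg
  have hstep : ∀ i ≤ t, (descentStep A r T)^[i + 1] v =
      secondParent A T ((descentStep A r T)^[i] v) := fun i hi => by
    rw [Function.iterate_succ_apply', descentStep_of_hasBackArc (hchain i hi)]
  refine succ_lt_of_caterpillar (ρ := treeDepth T r) (u := fun i => (descentStep A r T)^[i] v)
    (c := c) (fun i hi => ⟨?_, ?_⟩) hno (descentStep A r T) (treeParent T)
    (fun i hi => ⟨(Function.iterate_succ_apply' _ _ _).symm, ?_⟩)
    (fun i hi => ⟨(hT.isRootedTree.eq_treeParent (hc i hi).1).symm, hT.1 _ _ (hc i hi).1⟩)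
  · rw [hT.isRootedTree.treeDepth_of_rel (hc i hi).1]
    exact Nat.lt_succ_self _
  · rw [hstep i hi]
    exact (hc i hi).2
  · rw [hstep i hi]
    exact (secondParent_spec (hdeg _)).1

theorem ncard_descentTree_le (hno : OutTreeLeavesLT A k) (hx : x ∈ descentRoots A r T) :
    (descentTree A r T x).ncard ≤ k * (descentLeaves A r T x).ncard := by
  have hk := ncard_descentLeaves_lt hT hor hdeg hno hx
  have hsub : descentTree A r T x ⊆
      (fun q : V × ℕ => (descentStep A r T)^[q.2] q.1) '' (descentLeaves A r T x ×ˢ Set.Iio k) := by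
    intro v hv
    obtain ⟨l, hl, n, rfl, hchain⟩ := exists_descentLeaves_iterate_eq hT hor hdeg hv
    refine ⟨(l, n), ⟨hl, ?_⟩, rfl⟩
    obtain _ | t := n
    · exact Nat.zero_lt_of_lt hk
    · exact succ_lt_of_forall_hasBackArc_iterate hT hor hdeg hno fun i hi => hchain i (by omega)
  calc (descentTree A r T x).ncard
      ≤ (descentLeaves A r T x ×ˢ Set.Iio k).ncard := (Set.ncard_le_ncard hsub).trans
        (Set.ncard_image_le (Set.toFinite _ |>.prod (Set.finite_Iio k)))
    _ = k * (descentLeaves A r T x).ncard := by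
        rw [Set.ncard_prod, Set.ncard_eq_toFinset_card' (Set.Iio k), Set.toFinset_Iio,
          Nat.card_Iio, mul_comm]

/-- The descent trees whose roots have the same second parent `w`, a leaf of `T`, hang below
`w` as one out-tree. -/
theorem sum_ncard_descentLeaves_lt
    (hno : OutTreeLeavesLT A k) {w : V} (hw : ∀ u, ¬ T w u) (G : Finset V)
    (hG : ∀ x ∈ G, x ∈ descentRoots A r T ∧ secondParent A T x = w) :
    ∑ x ∈ G, (descentLeaves A r T x).ncard < k := by
  classical
  have hw_notMem : ∀ x ∈ G, w ∉ descentTree A r T x := fun x hx =>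
    notMem_descentTree_of_forall_not_rel hor hdeg hw (hG x hx).2
  have hdisj : (G : Set V).PairwiseDisjoint (descentLeaves A r T) :=
    fun x hx y hy hxy => Set.disjoint_left.mpr fun v hvx hvy =>
      hxy (eq_of_mem_descentTree (hG x hx).1 (hG y hy).1 hvx.1 hvy.1)
  rw [← ncard_biUnion_finset G _ hdisj]
  refine ncard_lt_of_parentTree hno (S := insert w (⋃ x ∈ G, descentTree A r T x))
    (p := fun v => if v ∈ G then w else secondParent A T v)
    (fun v => if v = w then 0 else Fintype.card V + 1 - treeDepth T r v)
    (Set.mem_insert w _) (fun v hv hvw => ?_) ?_ (fun b hb hbw hl => ?_)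
  · obtain ⟨x, hx, hvx⟩ := Set.mem_iUnion₂.mp (hv.resolve_left hvw)
    have hdep := hT.isRootedTree.treeDepth_lt_card v
    by_cases hvG : v ∈ G
    · simp only [if_pos hvG, if_neg hvw, ↓reduceIte]
      exact ⟨Set.mem_insert w _, (hG v hvG).2 ▸ (secondParent_spec (hdeg v)).1, by omega⟩
    · obtain ⟨hmem, hA, hdep'⟩ :=
        descentTree_parent_step hT hor hdeg (hG x hx).1 hvx (fun h => hvG (h ▸ hx))
      have hne : secondParent A T v ≠ w := fun h => hw_notMem x hx (h ▸ hmem)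
      simp only [if_neg hvG, if_neg hvw, if_neg hne]
      exact ⟨Or.inr (Set.mem_biUnion hx hmem), hA, by omega⟩
  · exact Set.iUnion₂_mono (fun x _ => fun _ hl => hl.1) |>.trans (Set.subset_insert _ _)
  · obtain ⟨x, hx, hbx⟩ := Set.mem_iUnion₂.mp (hb.resolve_left hbw)
    obtain ⟨y, hy, hly⟩ := Set.mem_iUnion₂.mp hl
    by_cases hbG : b ∈ G
    · rw [if_pos hbG] at hly
      exact hw_notMem y hy hly.1
    · rw [if_neg hbG] at hly
      exact hly.2 b (hasBackArc_of_mem_descentTree hbx fun h => hbG (h ▸ hx)) rfl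

open Classical in
theorem card_eq_one_add_sum_ncard_descentTree :
    Fintype.card V = 1 + ∑ x with x ∈ descentRoots A r T, (descentTree A r T x).ncard := by
  have hdisj : ((univ.filter (· ∈ descentRoots A r T) : Finset V) : Set V).PairwiseDisjoint
      (descentTree A r T) := fun x hx y hy hxy => Set.disjoint_left.mpr fun _ hvx hvy =>
    hxy (eq_of_mem_descentTree (by simpa using hx) (by simpa using hy) hvx hvy)
  have hcover : ⋃ x ∈ univ.filter (· ∈ descentRoots A r T), descentTree A r T x = {r}ᶜ := by
    ext v
    simp only [Set.mem_iUnion, mem_filter, mem_univ, true_and, exists_prop, Set.mem_compl_iff,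
      Set.mem_singleton_iff]
    exact ⟨fun ⟨_, _, hv⟩ => hv.1, exists_mem_descentRoots_mem_descentTree hT hor hdeg⟩
  rw [← ncard_biUnion_finset _ _ hdisj, hcover, ← Nat.card_eq_fintype_card,
    ← Set.ncard_add_ncard_compl {r}, Set.ncard_singleton]

open Classical in
/-- Roots whose tree parent has other children are at most `2 (ℓ - 1)`; the others are grouped
by their second parent, a leaf of `T`. -/
theorem sum_ncard_descentLeaves_le
    (hmax : ∀ r' T', IsOutBranching A r' T' → leavesCount T' ≤ leavesCount T)
    (hno : OutTreeLeavesLT A k) :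
    ∑ x with x ∈ descentRoots A r T, (descentLeaves A r T x).ncard ≤
      (k - 1) * (2 * (leavesCount T - 1) + leavesCount T) := by
  set R := univ.filter (· ∈ descentRoots A r T)
  have hR : ∀ x ∈ R, x ∈ descentRoots A r T := fun x hx => (mem_filter.mp hx).2
  have hleaves : ∀ x ∈ R, (descentLeaves A r T x).ncard ≤ k - 1 := fun x hx => by
    have := ncard_descentLeaves_lt hT hor hdeg hno (hR x hx)
    omega
  have hsingle : ∑ x ∈ R with outDeg T (treeParent T x) = 1, (descentLeaves A r T x).ncard ≤
      leavesCount T * (k - 1) := by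
    have hmaps : ∀ x ∈ R.filter (fun x => outDeg T (treeParent T x) = 1),
        secondParent A T x ∈ univ.filter (outDeg T · = 0) := by
      intro x hx
      obtain ⟨hxR, hout⟩ := mem_filter.mp hx
      obtain ⟨hxr, hxb⟩ := hR x hxR
      simpa [outDeg_eq_zero_iff] using
        hT.secondParent_isLeaf hmax (hdeg x) hxr hout fun h => hxb ⟨hxr, h⟩
    rw [← sum_fiberwise_of_maps_to hmaps, leavesCount_eq_card, card_eq_sum_ones,
      sum_mul, one_mul]
    refine sum_le_sum fun w hw => Nat.le_sub_one_of_lt ?_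
    refine sum_ncard_descentLeaves_lt hT hor hdeg hno (w := w) ?_ _ fun x hx => ?_
    · exact outDeg_eq_zero_iff.mp (mem_filter.mp hw).2
    · simp only [mem_filter] at hx
      exact ⟨hR x hx.1.1, hx.2⟩
  have hbranch : ∑ x ∈ R with ¬ outDeg T (treeParent T x) = 1, (descentLeaves A r T x).ncard ≤
      2 * (leavesCount T - 1) * (k - 1) := by
    refine (sum_le_card_nsmul _ _ _ fun x hx => hleaves x (mem_filter.mp hx).1).trans ?_
    rw [smul_eq_mul]
    refine Nat.mul_le_mul_right _ ((card_le_card fun x hx => ?_).trans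
      hT.isRootedTree.card_outDeg_treeParent_ne_one_le)
    simp only [mem_filter] at hx ⊢
    exact ⟨mem_univ x, (hR x hx.1).1, hx.2⟩
  rw [← sum_filter_add_sum_filter_not R (fun x => outDeg T (treeParent T x) = 1)]
  linarith

theorem card_le_of_forall_leavesCount_le
    (hmax : ∀ r' T', IsOutBranching A r' T' → leavesCount T' ≤ leavesCount T)
    (hno : OutTreeLeavesLT A k) :
    Fintype.card V ≤ 1 + k * ((k - 1) * (2 * (leavesCount T - 1) + leavesCount T)) := by
  classical
  rw [card_eq_one_add_sum_ncard_descentTree hT hor hdeg]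
  gcongr 1 + ?_
  calc ∑ x with x ∈ descentRoots A r T, (descentTree A r T x).ncard
      ≤ ∑ x with x ∈ descentRoots A r T, k * (descentLeaves A r T x).ncard :=
        sum_le_sum fun x hx => ncard_descentTree_le hT hor hdeg hno (mem_filter.mp hx).2
    _ ≤ k * ((k - 1) * (2 * (leavesCount T - 1) + leavesCount T)) := by
        rw [← mul_sum]
        exact Nat.mul_le_mul_left k (sum_ncard_descentLeaves_le hT hor hdeg hmax hno)

end Descent

end

theorem stmt_5_general {V : Type*} [Fintype V] (A : V → V → Prop) (k : ℕ)
    (horient : ∀ u v : V, A u v → ¬ A v u)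
    (hindeg : ∀ v : V, {u : V | A u v}.ncard = 2)
    (hbr : ∃ (r : V) (T : V → V → Prop), IsOutBranching A r T)
    (hno : ∀ (S : Set V) (r : V) (T : V → V → Prop),
      IsOutTree A S r T → treeLeaves S T < k) :
    Fintype.card V ≤ 4 * k ^ 3 := by
  obtain ⟨r, T, hT, hmax⟩ := exists_isOutBranching_forall_leavesCount_le hbr
  have hℓ : leavesCount T < k := hT.leavesCount_lt hno
  have hcard := card_le_of_forall_leavesCount_le hT horient (fun v => (hindeg v).ge) hmax hno
  have hfactor : (k - 1) * (2 * (leavesCount T - 1) + leavesCount T) ≤ k * (3 * k) :=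
    Nat.mul_le_mul (Nat.sub_le k 1) (by omega)
  calc Fintype.card V ≤ 1 + k * (k * (3 * k)) := hcard.trans (by gcongr)
    _ ≤ 4 * k ^ 3 := by nlinarith [Nat.one_le_pow 3 k (by omega)]

/-- If an oriented graph of order `n` with all in-degrees 2 has an out-branching but
no out-tree with `k` leaves, then `n ≤ 4k³`. -/
theorem stmt_5 {V : Type*} [Fintype V] (A : V → V → Prop) (k : ℕ) (hk : 0 < k)
    (horient : ∀ u v : V, A u v → ¬ A v u)
    (hindeg : ∀ v : V, {u : V | A u v}.ncard = 2)
    (hbr : ∃ (r : V) (T : V → V → Prop), IsOutBranching A r T)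
    (hno : ∀ (S : Set V) (r : V) (T : V → V → Prop),
      IsOutTree A S r T → treeLeaves S T < k) :
    Fintype.card V ≤ 4 * k ^ 3 :=
  stmt_5_general A k horient hindeg hbr hno
end

section
/- For any finite undirected graph G, the vertex separation number of G equals the pathwidth of G. -/
open Relation

/-!
Given an ordering of vertex separation `k`, the bags `{vⱼ} ∪ ∂Vⱼ₋₁` form a path decomposition of
width `k`: an edge `vᵢvⱼ` with `i < j` lies in the `j`-th bag, and a vertex stays in the bags from
its own position up to its last neighbour. Conversely, list the vertices by the first bag
containing them. Each vertex of `∂Vⱼ` lies in a bag before or at the first bag of `vⱼ₊₁` and,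
together with its later neighbour, in a bag at or after it; so `∂Vⱼ` is contained in that bag
with `vⱼ₊₁` removed.
-/

section OrderingToDecomposition

variable {ι V : Type*} [LinearOrder ι]

lemma ncard_lt_boundary_le [PredOrder ι] {R : ι → ι → Prop} {k : ℕ}
    (h : ∀ j, {i | i ≤ j ∧ ∃ i', j < i' ∧ R i i'}.ncard ≤ k) (j : ι) :
    {i | i < j ∧ ∃ i', j ≤ i' ∧ R i i'}.ncard ≤ k := by
  by_cases hj : IsMin j
  · simp [hj.not_lt]
  · convert h (Order.pred j) using 4
    simp only [Order.le_pred_iff_of_not_isMin hj, Order.pred_lt_iff_of_not_isMin hj]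

variable [Fintype ι] (G : SimpleGraph V) (σ : ι ≃ V)

open Classical in
noncomputable def orderingBag (j : ι) : Finset V :=
  insert (σ j) ((Finset.univ.filter fun i => i < j ∧ ∃ i', j ≤ i' ∧ G.Adj (σ i) (σ i')).map
    σ.toEmbedding)

variable {G σ}

lemma mem_orderingBag {v : V} {j : ι} :
    v ∈ orderingBag G σ j ↔ σ.symm v = j ∨ (σ.symm v < j ∧ ∃ i', j ≤ i' ∧ G.Adj v (σ i')) := by
  simp [orderingBag, Equiv.symm_apply_eq]

lemma card_orderingBag_le (j : ι) :
    (orderingBag G σ j).card ≤ {i | i < j ∧ ∃ i', j ≤ i' ∧ G.Adj (σ i) (σ i')}.ncard + 1 := by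
  classical
  refine (Finset.card_insert_le _ _).trans ?_
  rw [Finset.card_map, ← Set.ncard_coe_finset, Finset.coe_filter]
  simp

lemma exists_orderingBag_of_adj {u v : V} (huv : G.Adj u v) :
    ∃ j, u ∈ orderingBag G σ j ∧ v ∈ orderingBag G σ j := by
  wlog hlt : σ.symm u < σ.symm v generalizing u v
  · have hne : σ.symm v ≠ σ.symm u := σ.symm.injective.ne huv.ne.symm
    obtain ⟨j, hv, hu⟩ := this huv.symm (lt_of_le_of_ne (not_lt.1 hlt) hne)
    exact ⟨j, hu, hv⟩
  exact ⟨σ.symm v, mem_orderingBag.2 (Or.inr ⟨hlt, σ.symm v, le_rfl, by simpa using huv⟩),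
    mem_orderingBag.2 (Or.inl rfl)⟩

lemma mem_orderingBag_of_le_of_le {i j l : ι} (hij : i ≤ j) (hjl : j ≤ l) {v : V}
    (hi : v ∈ orderingBag G σ i) (hl : v ∈ orderingBag G σ l) : v ∈ orderingBag G σ j := by
  rw [mem_orderingBag] at hi hl ⊢
  have hvj : σ.symm v ≤ j := by rcases hi with h | h <;> [exact h ▸ hij; exact h.1.le.trans hij]
  rcases hvj.eq_or_lt with hvj | hvj
  · exact Or.inl hvj
  rcases hl with hl | ⟨-, i', hli', hadj⟩
  · exact absurd (hl ▸ hvj) (not_lt.2 hjl)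
  · exact Or.inr ⟨hvj, i', hjl.trans hli', hadj⟩

end OrderingToDecomposition

lemma pwLE_of_vsLE {V : Type*} [Fintype V] {G : SimpleGraph V} {k : ℕ} (h : vsLE G k) :
    pwLE G k := by
  obtain ⟨σ, hσ⟩ := h
  exact ⟨_, orderingBag G σ, fun v => ⟨σ.symm v, mem_orderingBag.2 (Or.inl rfl)⟩,
    fun _ _ => exists_orderingBag_of_adj,
    fun _ _ _ hij hjl _ => mem_orderingBag_of_le_of_le hij hjl,
    fun j => (card_orderingBag_le j).trans (Nat.add_le_add_right (ncard_lt_boundary_le hσ j) 1)⟩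

section DecompositionToOrdering

variable {ι κ V : Type*} [LinearOrder ι] {X : ι → Finset V}

lemma exists_first_mem [WellFoundedLT ι] (hcov : ∀ v, ∃ i, v ∈ X i) :
    ∃ f : V → ι, ∀ v, v ∈ X (f v) ∧ ∀ i, v ∈ X i → f v ≤ i := by
  choose f hf using fun v => wellFounded_lt.has_min {i | v ∈ X i} (hcov v)
  exact ⟨f, fun v => ⟨(hf v).1, fun i hi => not_lt.1 ((hf v).2 i hi)⟩⟩

variable [LinearOrder κ] [SuccOrder κ] {G : SimpleGraph V} {f : V → ι} {σ : κ ≃ V}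

lemma image_boundary_subset_erase_firstBag [DecidableEq V]
    (hedge : ∀ u v, G.Adj u v → ∃ i, u ∈ X i ∧ v ∈ X i)
    (hint : ∀ i j k, i ≤ j → j ≤ k → ∀ v, v ∈ X i → v ∈ X k → v ∈ X j)
    (hf : ∀ v, v ∈ X (f v) ∧ ∀ i, v ∈ X i → f v ≤ i) (hσ : Monotone (f ∘ σ))
    {j : κ} (hj : ¬IsMax j) :
    σ '' {i | i ≤ j ∧ ∃ i', j < i' ∧ G.Adj (σ i) (σ i')} ⊆
      ((X (f (σ (Order.succ j)))).erase (σ (Order.succ j)) : Set V) := by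
  rintro _ ⟨i, ⟨hij, i', hji', hadj⟩, rfl⟩
  obtain ⟨m, him, hi'm⟩ := hedge _ _ hadj
  have hi_lt : i < Order.succ j := (Order.lt_succ_iff_of_not_isMax hj).2 hij
  have hsucc_le : Order.succ j ≤ i' := (Order.succ_le_iff_of_not_isMax hj).2 hji'
  exact Finset.mem_erase.2 ⟨σ.injective.ne hi_lt.ne,
    hint _ _ _ (hσ hi_lt.le) ((hσ hsucc_le).trans ((hf _).2 _ hi'm)) _ (hf _).1 him⟩

lemma ncard_boundary_le_of_monotone
    (hedge : ∀ u v, G.Adj u v → ∃ i, u ∈ X i ∧ v ∈ X i)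
    (hint : ∀ i j k, i ≤ j → j ≤ k → ∀ v, v ∈ X i → v ∈ X k → v ∈ X j)
    (hf : ∀ v, v ∈ X (f v) ∧ ∀ i, v ∈ X i → f v ≤ i) (hσ : Monotone (f ∘ σ))
    {k : ℕ} (hcard : ∀ i, (X i).card ≤ k + 1) (j : κ) :
    {i | i ≤ j ∧ ∃ i', j < i' ∧ G.Adj (σ i) (σ i')}.ncard ≤ k := by
  classical
  by_cases hj : IsMax j
  · simp [hj.not_lt]
  set b := σ (Order.succ j)
  calc _ = (σ '' {i | i ≤ j ∧ ∃ i', j < i' ∧ G.Adj (σ i) (σ i')}).ncard :=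
        (Set.ncard_image_of_injective _ σ.injective).symm
    _ ≤ (((X (f b)).erase b : Finset V) : Set V).ncard :=
        Set.ncard_le_ncard (image_boundary_subset_erase_firstBag hedge hint hf hσ hj)
          (Finset.finite_toSet _)
    _ = (X (f b)).card - 1 := by rw [Set.ncard_coe_finset, Finset.card_erase_of_mem (hf b).1]
    _ ≤ k := by have := hcard (f b); omega

end DecompositionToOrdering

lemma exists_equiv_fin_monotone {V α : Type*} [Fintype V] [LinearOrder α] (f : V → α) :
    ∃ σ : Fin (Fintype.card V) ≃ V, Monotone (f ∘ σ) :=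
  ⟨(Tuple.sort (f ∘ (Fintype.equivFin V).symm)).trans (Fintype.equivFin V).symm,
    Tuple.monotone_sort (f ∘ (Fintype.equivFin V).symm)⟩

lemma vsLE_of_pwLE {V : Type*} [Fintype V] {G : SimpleGraph V} {k : ℕ} (h : pwLE G k) :
    vsLE G k := by
  obtain ⟨s, X, hcov, hedge, hint, hcard⟩ := h
  obtain ⟨f, hf⟩ := exists_first_mem hcov
  obtain ⟨σ, hσ⟩ := exists_equiv_fin_monotone f
  exact ⟨σ, ncard_boundary_le_of_monotone hedge hint hf hσ hcard⟩

/-- For any finite graph, the vertex separation number equals the pathwidth. -/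
theorem stmt_9 {V : Type*} [Fintype V] (G : SimpleGraph V) :
    sInf {k : ℕ | vsLE G k} = sInf {k : ℕ | pwLE G k} := by
  congr 1
  ext k
  exact ⟨pwLE_of_vsLE, vsLE_of_pwLE⟩
end

section
/- There exists a constant c > 0 such that for every strongly connected digraph D: either D has an out-branching with at least k leaves, or the pathwidth of the underlying undirected graph of D is at most c·k·log k. -/
open Relation

/-!
If every out-branching of the strongly connected digraph has fewer than `k` leaves, then so does
every out-tree, because an out-tree extends to an out-branching without losing leaves. Hence
fewer than `k` vertices outside an out-tree can each have an in-neighbour in it.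

Fix an out-branching `T` and order the vertices by a depth-first traversal of `T` that visits
the children of a vertex in increasing order of the number of leaves below them. The bag of `x`
consists of `x` and the vertices separated from an in-neighbour by the cut at `x`. Those after
`x` with an in-neighbour before `x` hang off the out-tree formed by the vertices up to `x`. Those
before `x` with an in-neighbour after `x` hang off the subtrees of the late children of an
ancestor of `x`; the number of leaves below these "active" ancestors at least halves from one to
the next, so there are at most `log₂ k + 1` of them. Every bag thus has `O(k log k)` vertices.
-/

section RootedTree

variable {V : Type*} {T : V → V → Prop} {r : V}

theorem IsOutBranching.isRootedTree_s11 {A : V → V → Prop} (h : IsOutBranching A r T) :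
    IsRootedTree T r :=
  h.2

namespace IsRootedTree

theorem parent_unique (hT : IsRootedTree T r) {u u' v : V} (h : T u v) (h' : T u' v) :
    u = u' := by
  obtain ⟨p, -, hp⟩ := hT.2.1 v fun hv => hT.1 u (hv ▸ h)
  rw [hp u h, hp u' h']

theorem reflTransGen_parent (hT : IsRootedTree T r) {a c w : V} (h : ReflTransGen T a c)
    (hne : a ≠ c) (hw : T w c) : ReflTransGen T a w := by
  rcases h.cases_tail with rfl | ⟨u, hau, huc⟩
  · exact absurd rfl hne
  · exact hT.parent_unique huc hw ▸ hau

theorem not_transGen_self (hT : IsRootedTree T r) (v : V) : ¬ TransGen T v v := by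
  intro h
  induction hT.2.2 v with
  | refl =>
    obtain ⟨b, -, hbr⟩ := TransGen.tail'_iff.mp h
    exact hT.1 b hbr
  | tail _ huv ih =>
    obtain ⟨w, hvw, hwv⟩ := TransGen.tail'_iff.mp h
    exact ih (TransGen.head' huv (hT.parent_unique hwv huv ▸ hvw))

theorem not_reflTransGen_of_rel (hT : IsRootedTree T r) {x c : V} (h : T x c) :
    ¬ ReflTransGen T c x :=
  fun h' => hT.not_transGen_self x (TransGen.head' h h')

theorem reflTransGen_antisymm (hT : IsRootedTree T r) {a b : V} (h : ReflTransGen T a b)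
    (h' : ReflTransGen T b a) : a = b := by
  rcases h.cases_head with rfl | ⟨c, hac, hcb⟩
  · rfl
  · exact absurd (hcb.trans h') (hT.not_reflTransGen_of_rel hac)

theorem total_of_reflTransGen (hT : IsRootedTree T r) {a b v : V} (ha : ReflTransGen T a v)
    (hb : ReflTransGen T b v) : ReflTransGen T a b ∨ ReflTransGen T b a := by
  induction ha generalizing b with
  | refl => exact Or.inr hb
  | @tail c d hac hcd ih =>
    rcases hb.cases_tail with rfl | ⟨e, hbe, hed⟩
    · exact Or.inl (hac.tail hcd)
    · exact ih (hT.parent_unique hed hcd ▸ hbe)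

theorem reflTransGen_or_reflTransGen_of_rel (hT : IsRootedTree T r) {z c a v : V} (hzc : T z c)
    (hc : ReflTransGen T c v) (ha : ReflTransGen T a v) :
    ReflTransGen T c a ∨ ReflTransGen T a z := by
  by_cases hac : a = c
  · exact Or.inl (hac ▸ .refl)
  · exact (hT.total_of_reflTransGen hc ha).imp_right fun h => hT.reflTransGen_parent h hac hzc

theorem eq_of_rel_of_reflTransGen (hT : IsRootedTree T r) {z c c' v : V} (hc : T z c)
    (hc' : T z c') (hv : ReflTransGen T c v) (hv' : ReflTransGen T c' v) : c = c' := by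
  rcases hT.reflTransGen_or_reflTransGen_of_rel hc hv hv' with h | h
  · rcases h.cases_tail with h | ⟨w, hcw, hwc'⟩
    · exact h.symm
    · exact absurd (hT.parent_unique hwc' hc' ▸ hcw) (hT.not_reflTransGen_of_rel hc)
  · exact absurd h (hT.not_reflTransGen_of_rel hc')

theorem exists_deepest_common_ancestor (hT : IsRootedTree T r) (u v : V) :
    ∃ w, ReflTransGen T w u ∧ ReflTransGen T w v ∧
      ∀ c, T w c → ReflTransGen T c u → ¬ ReflTransGen T c v := by
  induction hT.2.2 u with
  | refl => exact ⟨r, .refl, hT.2.2 v, fun c hc hcr _ => hT.not_reflTransGen_of_rel hc hcr⟩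
  | @tail a u _ hau ih =>
    by_cases huv : ReflTransGen T u v
    · exact ⟨u, .refl, huv, fun c hc hcu _ => hT.not_reflTransGen_of_rel hc hcu⟩
    obtain ⟨w, hwa, hwv, hmin⟩ := ih
    refine ⟨w, hwa.tail hau, hwv, fun c hwc hcu hcv => ?_⟩
    rcases eq_or_ne c u with rfl | hne
    · exact huv hcv
    · exact hmin c hwc (hT.reflTransGen_parent hcu hne hau) hcv

end IsRootedTree

end RootedTree

section Leaves

variable {V : Type*} {T : V → V → Prop} {r : V}

def subtree (T : V → V → Prop) (x : V) : Set V := {v | ReflTransGen T x v}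

theorem treeLeaves_mono [Finite V] {S S' : Set V} (h : S ⊆ S') :
    treeLeaves S T ≤ treeLeaves S' T :=
  Set.ncard_le_ncard (fun _ hv => ⟨h hv.1, hv.2⟩) (Set.toFinite _)

theorem treeLeaves_le_leavesCount [Finite V] (S : Set V) : treeLeaves S T ≤ leavesCount T :=
  Set.ncard_le_ncard (fun _ hv => hv.2) (Set.toFinite _)

theorem treeLeaves_univ : treeLeaves Set.univ T = leavesCount T := by
  simp [treeLeaves, leavesCount]

namespace IsRootedTree

theorem wellFounded_swap_transGen [Finite V] (hT : IsRootedTree T r) :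
    WellFounded (Function.swap (TransGen T)) :=
  haveI : IsTrans V (Function.swap (TransGen T)) := ⟨fun _ _ _ h h' => h'.trans h⟩
  haveI : Std.Irrefl (Function.swap (TransGen T)) := ⟨hT.not_transGen_self⟩
  Finite.wellFounded_of_trans_of_irrefl _

theorem treeLeaves_subtree_pos [Finite V] (hT : IsRootedTree T r) (x : V) :
    0 < treeLeaves (subtree T x) T := by
  obtain ⟨m, hm, hmin⟩ := hT.wellFounded_swap_transGen.has_min (subtree T x) ⟨x, .refl⟩
  refine (Set.ncard_pos (Set.toFinite _)).mpr ⟨m, hm, fun u hmu => ?_⟩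
  exact hmin u (ReflTransGen.tail hm hmu) (TransGen.single hmu)

theorem treeLeaves_subtree_add_le [Finite V] (hT : IsRootedTree T r) {z c c' : V} (hc : T z c)
    (hc' : T z c') (hne : c ≠ c') :
    treeLeaves (subtree T c) T + treeLeaves (subtree T c') T ≤ treeLeaves (subtree T z) T := by
  have hdisj : Disjoint {v | v ∈ subtree T c ∧ ∀ u, ¬ T v u}
      {v | v ∈ subtree T c' ∧ ∀ u, ¬ T v u} :=
    Set.disjoint_left.mpr fun _ hv hv' => hne (hT.eq_of_rel_of_reflTransGen hc hc' hv.1 hv'.1)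
  rw [treeLeaves, treeLeaves, ← Set.ncard_union_eq hdisj (Set.toFinite _) (Set.toFinite _)]
  refine Set.ncard_le_ncard (fun v hv => ?_) (Set.toFinite _)
  rcases hv with ⟨hv, hleaf⟩ | ⟨hv, hleaf⟩
  · exact ⟨ReflTransGen.head hc hv, hleaf⟩
  · exact ⟨ReflTransGen.head hc' hv, hleaf⟩

end IsRootedTree

end Leaves

section OutTree

variable {V : Type*} {A T : V → V → Prop} {S : Set V} {ρ : V}

theorem isOutTree_singleton (x : V) : IsOutTree A {x} x fun _ _ => False :=
  ⟨rfl, fun _ _ h => h.elim, fun _ h => h, fun _ hv hne => absurd hv hne,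
    fun _ hv => hv ▸ .refl⟩

theorem IsOutTree.isOutBranching (h : IsOutTree A Set.univ ρ T) : IsOutBranching A ρ T :=
  ⟨fun u v huv => (h.2.1 u v huv).1, h.2.2.1, fun v => h.2.2.2.1 v trivial,
    fun v => h.2.2.2.2 v trivial⟩

theorem IsOutTree.attach (h : IsOutTree A S ρ T) {H : Set V} {f : V → V}
    (hH : ∀ y ∈ H, y ∉ S) (hf : ∀ y ∈ H, f y ∈ S ∧ A (f y) y) :
    IsOutTree A (S ∪ H) ρ fun p q => T p q ∨ (q ∈ H ∧ p = f q) := by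
  obtain ⟨hρ, harc, hroot, hpar, hreach⟩ := h
  have hlift : ∀ {a b}, ReflTransGen T a b →
      ReflTransGen (fun p q => T p q ∨ (q ∈ H ∧ p = f q)) a b :=
    fun h => ReflTransGen.mono (fun _ _ => Or.inl) _ _ h
  refine ⟨Or.inl hρ, ?_, ?_, ?_, ?_⟩
  · rintro u v (huv | ⟨hv, rfl⟩)
    · obtain ⟨hA, hu, hv⟩ := harc u v huv
      exact ⟨hA, Or.inl hu, Or.inl hv⟩
    · exact ⟨(hf v hv).2, Or.inl (hf v hv).1, Or.inr hv⟩
  · rintro u (hu | ⟨hρH, -⟩)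
    · exact hroot u hu
    · exact hH ρ hρH hρ
  · rintro v (hv | hv) hvρ
    · obtain ⟨u, hu, huniq⟩ := hpar v hv hvρ
      refine ⟨u, Or.inl hu, ?_⟩
      rintro u' (hu' | ⟨hvH, -⟩)
      · exact huniq u' hu'
      · exact absurd hv (hH v hvH)
    · refine ⟨f v, Or.inr ⟨hv, rfl⟩, ?_⟩
      rintro u' (hu' | ⟨-, rfl⟩)
      · exact absurd (harc u' v hu').2.2 (hH v hv)
      · rfl
  · rintro v (hv | hv)
    · exact hlift (hreach v hv)
    · exact (hlift (hreach (f v) (hf v hv).1)).tail (Or.inr ⟨hv, rfl⟩)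

theorem exists_arc_leaving_of_reflTransGen {a b : V} (h : ReflTransGen A a b) (ha : a ∈ S)
    (hb : b ∉ S) : ∃ s ∈ S, ∃ t ∉ S, A s t := by
  induction h with
  | refl => exact absurd ha hb
  | @tail c d _ hcd ih =>
    by_cases hc : c ∈ S
    · exact ⟨c, hc, d, hb, hcd⟩
    · exact ih hc

theorem IsOutTree.exists_insert [Finite V] (hA : ∀ u v, ReflTransGen A u v)
    (h : IsOutTree A S ρ T) {t₀ : V} (ht₀ : t₀ ∉ S) :
    ∃ t ∉ S, ∃ T', IsOutTree A (insert t S) ρ T' ∧ treeLeaves S T ≤ treeLeaves (insert t S) T' := by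
  obtain ⟨s, hs, t, ht, hst⟩ := exists_arc_leaving_of_reflTransGen (hA ρ t₀) h.1 ht₀
  have h' := h.attach (H := {t}) (f := fun _ => s) (by simpa using ht) (by simpa using ⟨hs, hst⟩)
  rw [Set.union_singleton] at h'
  refine ⟨t, ht, _, h', ?_⟩
  set T' : V → V → Prop := fun p q => T p q ∨ (q ∈ ({t} : Set V) ∧ p = s)
  have htleaf : t ∈ {v | v ∈ insert t S ∧ ∀ u, ¬ T' v u} := by
    refine ⟨Set.mem_insert t S, ?_⟩
    rintro u (htu | ⟨-, rfl⟩)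
    · exact ht (h.2.1 t u htu).2.1
    · exact ht hs
  have hsub : {v | v ∈ S ∧ ∀ u, ¬ T v u} ⊆
      insert s ({v | v ∈ insert t S ∧ ∀ u, ¬ T' v u} \ {t}) := by
    rintro v ⟨hv, hleaf⟩
    rcases eq_or_ne v s with rfl | hvs
    · exact Set.mem_insert _ _
    refine Set.mem_insert_of_mem _ ⟨⟨Set.mem_insert_of_mem t hv, ?_⟩, fun hvt => ht (hvt ▸ hv)⟩
    rintro u (hvu | ⟨-, rfl⟩)
    · exact hleaf u hvu
    · exact hvs rfl
  calc treeLeaves S T ≤ (insert s ({v | v ∈ insert t S ∧ ∀ u, ¬ T' v u} \ {t})).ncard :=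
        Set.ncard_le_ncard hsub (Set.toFinite _)
    _ ≤ ({v | v ∈ insert t S ∧ ∀ u, ¬ T' v u} \ {t}).ncard + 1 := Set.ncard_insert_le _ _
    _ = treeLeaves (insert t S) T' := Set.ncard_sdiff_singleton_add_one htleaf (Set.toFinite _)

theorem IsOutTree.exists_outBranching [Finite V] (hA : ∀ u v, ReflTransGen A u v)
    (h : IsOutTree A S ρ T) : ∃ T', IsOutBranching A ρ T' ∧ treeLeaves S T ≤ leavesCount T' := by
  induction hn : Sᶜ.ncard using Nat.strong_induction_on generalizing S T with
  | _ n ih =>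
    by_cases hS : S = Set.univ
    · subst hS
      exact ⟨T, h.isOutBranching, treeLeaves_univ.le⟩
    obtain ⟨t₀, ht₀⟩ := (Set.ne_univ_iff_exists_notMem S).mp hS
    obtain ⟨t, ht, T', h', hle⟩ := h.exists_insert hA ht₀
    have hlt : (insert t S)ᶜ.ncard < n :=
      hn ▸ Set.ncard_lt_ncard (compl_lt_compl_iff_lt.mpr (Set.ssubset_insert ht)) (Set.toFinite _)
    obtain ⟨T'', hT'', hle'⟩ := ih _ hlt h' rfl
    exact ⟨T'', hT'', hle.trans hle'⟩

theorem IsOutTree.treeLeaves_lt [Finite V] (hA : ∀ u v, ReflTransGen A u v) {k : ℕ}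
    (hk : ∀ r T, IsOutBranching A r T → leavesCount T < k) (h : IsOutTree A S ρ T) :
    treeLeaves S T < k :=
  let ⟨_, hT', hle⟩ := h.exists_outBranching hA
  hle.trans_lt (hk _ _ hT')

/-- Attaching the vertices of `H` to an out-tree turns all of them into leaves. -/
theorem IsOutTree.ncard_pendant_lt [Finite V] {k : ℕ}
    (hk : ∀ S r T, IsOutTree A S r T → treeLeaves S T < k) (h : IsOutTree A S ρ T) {H : Set V}
    (hH : ∀ y ∈ H, y ∉ S) (harc : ∀ y ∈ H, ∃ u ∈ S, A u y) : H.ncard < k := by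
  choose! f hf using harc
  have hleaves : H ⊆ {v | v ∈ S ∪ H ∧ ∀ u, ¬ (T v u ∨ (u ∈ H ∧ v = f u))} := by
    refine fun y hy => ⟨Or.inr hy, ?_⟩
    rintro u (hyu | ⟨hu, rfl⟩)
    · exact hH y hy (h.2.1 y u hyu).2.1
    · exact hH _ hy (hf u hu).1
  exact (Set.ncard_le_ncard hleaves (Set.toFinite _)).trans_lt
    (hk _ _ _ (h.attach hH fun y hy => hf y hy))

theorem IsOutBranching.isOutTree_restrict (hT : IsOutBranching A ρ T) {P : Set V} {z : V}
    (hz : z ∈ P) (hreach : ∀ v ∈ P, ReflTransGen T z v)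
    (hcl : ∀ v ∈ P, v ≠ z → ∀ u, T u v → u ∈ P) :
    IsOutTree A P z fun a b => T a b ∧ a ∈ P ∧ b ∈ P := by
  refine ⟨hz, fun u v h => ⟨hT.1 u v h.1, h.2⟩, fun u h =>
    hT.isRootedTree_s11.not_reflTransGen_of_rel h.1 (hreach u h.2.1), fun v hv hvz => ?_,
    fun v hv => ?_⟩
  · obtain hzv | ⟨u, -, huv⟩ := (hreach v hv).cases_tail
    · exact absurd hzv hvz
    exact ⟨u, ⟨huv, hcl v hv hvz u huv, hv⟩,
      fun u' h => hT.isRootedTree_s11.parent_unique h.1 huv⟩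
  · induction hreach v hv with
    | refl => exact .refl
    | @tail c d _ hcd ih =>
      rcases eq_or_ne d z with rfl | hdz
      · exact .refl
      · have hc := hcl d hv hdz c hcd
        exact (ih hc).tail ⟨hcd, hc, hv⟩

theorem IsOutBranching.isOutTree_insert_biUnion_subtree (hT : IsOutBranching A ρ T) {z : V}
    {C : Set V} (hC : ∀ c ∈ C, T z c) :
    IsOutTree A (insert z (⋃ c ∈ C, subtree T c)) z
      fun a b => T a b ∧ a ∈ insert z (⋃ c ∈ C, subtree T c) ∧
        b ∈ insert z (⋃ c ∈ C, subtree T c) := by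
  refine hT.isOutTree_restrict (Set.mem_insert z _) ?_ ?_
  · rintro v (rfl | hv)
    · exact .refl
    · obtain ⟨c, hc, hcv⟩ := Set.mem_iUnion₂.mp hv
      exact .head (hC c hc) hcv
  · rintro v (rfl | hv) hvz u huv
    · exact absurd rfl hvz
    obtain ⟨c, hc, hcv⟩ := Set.mem_iUnion₂.mp hv
    rcases eq_or_ne c v with rfl | hcv'
    · exact Or.inl (hT.isRootedTree_s11.parent_unique huv (hC c hc))
    · exact Or.inr (Set.mem_iUnion₂.mpr ⟨c, hc, hT.isRootedTree_s11.reflTransGen_parent hcv hcv' huv⟩)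

end OutTree

section DfsOrder

variable {V : Type*} {T : V → V → Prop} {r : V} {key : V → ℕ}

/-- Depth-first (preorder) traversal of the tree `T` that visits the children of each vertex in
increasing order of `key`: a vertex comes before its proper descendants, and the subtree of a
child `c₁` comes before that of a sibling `c₂` when `key c₁ < key c₂`. -/
def DfsBefore (T : V → V → Prop) (key : V → ℕ) (u v : V) : Prop :=
  (ReflTransGen T u v ∧ u ≠ v) ∨
    ∃ w c₁ c₂, T w c₁ ∧ T w c₂ ∧ key c₁ < key c₂ ∧ ReflTransGen T c₁ u ∧ ReflTransGen T c₂ v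

namespace IsRootedTree

theorem dfsBefore_irrefl (hT : IsRootedTree T r) (u : V) : ¬ DfsBefore T key u u := by
  rintro (⟨-, hne⟩ | ⟨w, c₁, c₂, hc₁, hc₂, hkey, h₁, h₂⟩)
  · exact hne rfl
  · exact (hT.eq_of_rel_of_reflTransGen hc₁ hc₂ h₁ h₂ ▸ hkey).false

theorem dfsBefore_trans (hT : IsRootedTree T r) {u v x : V} (h : DfsBefore T key u v)
    (h' : DfsBefore T key v x) : DfsBefore T key u x := by
  rcases h with ⟨huv, hne⟩ | ⟨w, c₁, c₂, hwc₁, hwc₂, hkey, hc₁u, hc₂v⟩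
  · rcases h' with ⟨hvx, -⟩ | ⟨w, c₁, c₂, hwc₁, hwc₂, hkey, hc₁v, hc₂x⟩
    · refine Or.inl ⟨huv.trans hvx, ?_⟩
      rintro rfl
      exact hne (hT.reflTransGen_antisymm huv hvx)
    · rcases hT.reflTransGen_or_reflTransGen_of_rel hwc₁ hc₁v huv with hc₁u | huw
      · exact Or.inr ⟨w, c₁, c₂, hwc₁, hwc₂, hkey, hc₁u, hc₂x⟩
      · refine Or.inl ⟨huw.trans (.head hwc₂ hc₂x), ?_⟩
        rintro rfl
        exact hT.not_reflTransGen_of_rel hwc₂ (hc₂x.trans huw)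
  · rcases h' with ⟨hvx, -⟩ | ⟨w', d₁, d₂, hw'd₁, hw'd₂, hkey', hd₁v, hd₂x⟩
    · exact Or.inr ⟨w, c₁, c₂, hwc₁, hwc₂, hkey, hc₁u, hc₂v.trans hvx⟩
    rcases hT.reflTransGen_or_reflTransGen_of_rel hwc₂ hc₂v (.head hw'd₁ hd₁v) with hc₂w' | hw'w
    · exact Or.inr ⟨w, c₁, c₂, hwc₁, hwc₂, hkey, hc₁u, hc₂w'.trans (.head hw'd₂ hd₂x)⟩
    rcases hT.reflTransGen_or_reflTransGen_of_rel hw'd₁ hd₁v (.head hwc₂ hc₂v) with hd₁w | hww'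
    · exact Or.inr ⟨w', d₁, d₂, hw'd₁, hw'd₂, hkey', hd₁w.trans (.head hwc₁ hc₁u), hd₂x⟩
    obtain rfl := hT.reflTransGen_antisymm hww' hw'w
    obtain rfl := hT.eq_of_rel_of_reflTransGen hwc₂ hw'd₁ hc₂v hd₁v
    exact Or.inr ⟨w, c₁, d₂, hwc₁, hw'd₂, hkey.trans hkey', hc₁u, hd₂x⟩

theorem dfsBefore_total (hT : IsRootedTree T r) (hkey : Function.Injective key) {u v : V}
    (hne : u ≠ v) : DfsBefore T key u v ∨ DfsBefore T key v u := by
  by_cases huv : ReflTransGen T u v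
  · exact Or.inl (Or.inl ⟨huv, hne⟩)
  by_cases hvu : ReflTransGen T v u
  · exact Or.inr (Or.inl ⟨hvu, hne.symm⟩)
  obtain ⟨w, hwu, hwv, hdeep⟩ := hT.exists_deepest_common_ancestor u v
  obtain hwu' | ⟨c₁, hwc₁, hc₁u⟩ := hwu.cases_head
  · exact absurd (hwu' ▸ hwv) huv
  obtain hwv' | ⟨c₂, hwc₂, hc₂v⟩ := hwv.cases_head
  · exact absurd (hwv' ▸ hwu) hvu
  have hc : c₁ ≠ c₂ := by
    rintro rfl
    exact hdeep c₁ hwc₁ hc₁u hc₂v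
  rcases lt_or_gt_of_ne (hkey.ne hc) with hlt | hgt
  · exact Or.inl (Or.inr ⟨w, c₁, c₂, hwc₁, hwc₂, hlt, hc₁u, hc₂v⟩)
  · exact Or.inr (Or.inr ⟨w, c₂, c₁, hwc₂, hwc₁, hgt, hc₂v, hc₁u⟩)

theorem isStrictTotalOrder_dfsBefore (hT : IsRootedTree T r) (hkey : Function.Injective key) :
    IsStrictTotalOrder V (DfsBefore T key) where
  trichotomous u v huv hvu := by
    by_contra hne
    exact (hT.dfsBefore_total hkey hne).elim huv hvu
  irrefl := hT.dfsBefore_irrefl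
  trans _ _ _ := hT.dfsBefore_trans

end IsRootedTree

end DfsOrder

section Levels

variable {V : Type*} {T : V → V → Prop} {r : V} {key : V → ℕ}

/-- The children of `z` visited after the child of `z` leading to `x` (all children of `z`,
if `z = x`). -/
def lateChildren (T : V → V → Prop) (key : V → ℕ) (x z : V) : Set V :=
  {c | T z c ∧ ∀ c', T z c' → ReflTransGen T c' x → key c' < key c}

def activeLevels (T : V → V → Prop) (key : V → ℕ) (x : V) : Set V :=
  {z | ReflTransGen T z x ∧ (lateChildren T key x z).Nonempty}

namespace IsRootedTree

theorem dfsBefore_iff (hT : IsRootedTree T r) {x u : V} :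
    DfsBefore T key x u ↔
      ∃ z, ReflTransGen T z x ∧ ∃ c ∈ lateChildren T key x z, ReflTransGen T c u := by
  constructor
  · rintro (⟨hxu, hne⟩ | ⟨w, c₁, c₂, hwc₁, hwc₂, hkey, hc₁x, hc₂u⟩)
    · obtain hxu' | ⟨c, hxc, hcu⟩ := hxu.cases_head
      · exact absurd hxu' hne
      exact ⟨x, .refl, c, ⟨hxc, fun c' hc' hc'x => absurd hc'x (hT.not_reflTransGen_of_rel hc')⟩,
        hcu⟩
    · refine ⟨w, .head hwc₁ hc₁x, c₂, ⟨hwc₂, fun c' hc' hc'x => ?_⟩, hc₂u⟩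
      rwa [hT.eq_of_rel_of_reflTransGen hc' hwc₁ hc'x hc₁x]
  · rintro ⟨z, hzx, c, ⟨hzc, hlate⟩, hcu⟩
    obtain rfl | ⟨c', hzc', hc'x⟩ := hzx.cases_head
    · refine Or.inl ⟨.head hzc hcu, ?_⟩
      rintro rfl
      exact hT.not_reflTransGen_of_rel hzc hcu
    · exact Or.inr ⟨z, c', c, hzc', hzc, hlate c' hzc' hc'x, hc'x, hcu⟩

/-- Two active levels `z` above `z'` are separated by a late child of `z`, which has at least as
many leaves below it as the child of `z` leading to `z'`. -/
theorem two_mul_treeLeaves_le [Finite V] (hT : IsRootedTree T r)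
    (hkey : ∀ a b, key a < key b → treeLeaves (subtree T a) T ≤ treeLeaves (subtree T b) T)
    {x z z' : V} (hz : z ∈ activeLevels T key x) (hz'x : ReflTransGen T z' x)
    (hzz' : ReflTransGen T z z') (hne : z ≠ z') :
    2 * treeLeaves (subtree T z') T ≤ treeLeaves (subtree T z) T := by
  obtain ⟨hzx, c, hzc, hlate⟩ := hz
  obtain rfl | ⟨c₀, hzc₀, hc₀x⟩ := hzx.cases_head
  · exact absurd (hT.reflTransGen_antisymm hzz' hz'x) hne
  have hc₀z' : ReflTransGen T c₀ z' :=
    (hT.reflTransGen_or_reflTransGen_of_rel hzc₀ hc₀x hz'x).resolve_right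
      fun h => hne (hT.reflTransGen_antisymm hzz' h)
  have hlt := hlate c₀ hzc₀ hc₀x
  have hz'c₀ : treeLeaves (subtree T z') T ≤ treeLeaves (subtree T c₀) T :=
    treeLeaves_mono fun _ hv => hc₀z'.trans hv
  have := hT.treeLeaves_subtree_add_le hzc₀ hzc (fun h => (h ▸ hlt).false)
  have := hkey _ _ hlt
  omega

theorem ncard_activeLevels_le [Finite V] (hT : IsRootedTree T r)
    (hkey : ∀ a b, key a < key b → treeLeaves (subtree T a) T ≤ treeLeaves (subtree T b) T)
    {k : ℕ} (hleaf : leavesCount T < k) (x : V) :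
    (activeLevels T key x).ncard ≤ Nat.log 2 (k - 1) + 1 := by
  set f : V → ℕ := fun z => Nat.log 2 (treeLeaves (subtree T z) T)
  have hlog : ∀ {z z'}, z ∈ activeLevels T key x → z' ∈ activeLevels T key x →
      ReflTransGen T z z' → z ≠ z' → f z' < f z := by
    intro z z' hz hz' hzz' hne
    have h2 := hT.two_mul_treeLeaves_le hkey hz hz'.1 hzz' hne
    have hpos := hT.treeLeaves_subtree_pos z'
    calc f z' < f z' + 1 := Nat.lt_succ_self _
      _ = Nat.log 2 (treeLeaves (subtree T z') T * 2) := (Nat.log_mul_base one_lt_two hpos.ne').symm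
      _ ≤ f z := Nat.log_mono_right (by omega)
  have hinj : Set.InjOn f (activeLevels T key x) := by
    intro z hz z' hz' heq
    by_contra hne
    rcases hT.total_of_reflTransGen hz.1 hz'.1 with h | h
    · exact (hlog hz hz' h hne).ne heq.symm
    · exact (hlog hz' hz h (Ne.symm hne)).ne heq
  have hmaps : ∀ z ∈ activeLevels T key x, f z ∈ Set.Iio (Nat.log 2 (k - 1) + 1) := by
    intro z _
    have := (treeLeaves_le_leavesCount (T := T) (subtree T z)).trans_lt hleaf
    exact Nat.lt_succ_of_le (Nat.log_mono_right (by omega))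
  simpa using Set.ncard_le_ncard_of_injOn f hmaps hinj

end IsRootedTree

end Levels

theorem Set.ncard_biUnion_le_mul {ι α : Type*} {s : Set ι} (hs : s.Finite) {f : ι → Set α}
    {m : ℕ} (h : ∀ i ∈ s, (f i).ncard ≤ m) : (⋃ i ∈ s, f i).ncard ≤ s.ncard * m := by
  lift s to Finset ι using hs
  calc (⋃ i ∈ (s : Set ι), f i).ncard ≤ ∑ i ∈ s, (f i).ncard := by
        simpa using Finset.set_ncard_biUnion_le s f
    _ ≤ s.card • m := Finset.sum_le_card_nsmul _ _ _ h
    _ = (s : Set ι).ncard * m := by rw [Set.ncard_coe_finset, smul_eq_mul]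

section Counting

variable {V : Type*} [Finite V] {A T : V → V → Prop} {r : V} {key : V → ℕ} {k : ℕ}

theorem ncard_outNeighbors_lt (hk : ∀ S ρ T, IsOutTree A S ρ T → treeLeaves S T < k) (x : V) :
    {y | y ≠ x ∧ A x y}.ncard < k :=
  (isOutTree_singleton x).ncard_pendant_lt hk (fun _ hy => hy.1) fun _ hy => ⟨x, rfl, hy.2⟩

variable [LinearOrder V]

theorem ncard_forward_lt (hk : ∀ S ρ T, IsOutTree A S ρ T → treeLeaves S T < k)
    (hT : IsOutBranching A r T) (hlt : ∀ a b : V, a < b ↔ DfsBefore T key a b) (x : V) :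
    {y | x < y ∧ ∃ u, A u y ∧ u ≤ x}.ncard < k := by
  have hparent : ∀ {u v}, T u v → u < v := fun {u v} huv => (hlt u v).mpr <|
    Or.inl ⟨.single huv, fun h => hT.isRootedTree_s11.not_reflTransGen_of_rel huv (h ▸ .refl)⟩
  have hrx : r ≤ x := by
    rcases eq_or_ne r x with rfl | hne
    · exact le_rfl
    · exact ((hlt r x).mpr (Or.inl ⟨hT.2.2.2 x, hne⟩)).le
  have hprefix := hT.isOutTree_restrict (P := {u | u ≤ x}) hrx (fun v _ => hT.2.2.2 v)
    fun _ hv _ _ huv => (hparent huv).le.trans hv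
  exact hprefix.ncard_pendant_lt hk (fun _ hy hyx => not_le.mpr hy.1 hyx)
    fun _ ⟨_, u, hAu, hu⟩ => ⟨u, hu, hAu⟩

/-- A vertex `y < x` with an in-neighbour `u > x` is handled at the active level `z` whose late
subtrees contain `u`; each level contributes at most `k` such `y`, as they hang off an out-tree. -/
theorem ncard_backward_le (hk : ∀ S ρ T, IsOutTree A S ρ T → treeLeaves S T < k)
    (hT : IsOutBranching A r T)
    (hkey : ∀ a b, key a < key b → treeLeaves (subtree T a) T ≤ treeLeaves (subtree T b) T)
    (hleaf : leavesCount T < k) (hlt : ∀ a b : V, a < b ↔ DfsBefore T key a b) (x : V) :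
    {y | y < x ∧ ∃ u, A u y ∧ x < u}.ncard ≤ (Nat.log 2 (k - 1) + 1) * k := by
  set pend : V → Set V := fun z => ⋃ c ∈ lateChildren T key x z, subtree T c
  set bag : V → Set V := fun z => insert z {y | y ∉ insert z (pend z) ∧ ∃ u ∈ pend z, A u y}
  have hsub : {y | y < x ∧ ∃ u, A u y ∧ x < u} ⊆ ⋃ z ∈ activeLevels T key x, bag z := by
    rintro y ⟨hyx, u, hAuy, hxu⟩
    obtain ⟨z, hzx, c, hc, hcu⟩ := hT.isRootedTree_s11.dfsBefore_iff.mp ((hlt x u).mp hxu)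
    refine Set.mem_iUnion₂.mpr ⟨z, ⟨hzx, c, hc⟩, ?_⟩
    rcases eq_or_ne y z with rfl | hyz
    · exact Set.mem_insert y _
    refine Or.inr ⟨?_, u, Set.mem_iUnion₂.mpr ⟨c, hc, hcu⟩, hAuy⟩
    rintro (rfl | hy)
    · exact hyz rfl
    obtain ⟨c', hc', hc'y⟩ := Set.mem_iUnion₂.mp hy
    exact hyx.not_gt ((hlt x y).mpr (hT.isRootedTree_s11.dfsBefore_iff.mpr ⟨z, hzx, c', hc', hc'y⟩))
  have hbag : ∀ z ∈ activeLevels T key x, (bag z).ncard ≤ k := by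
    intro z _
    have hH := (hT.isOutTree_insert_biUnion_subtree fun c hc => hc.1).ncard_pendant_lt hk
      (H := {y | y ∉ insert z (pend z) ∧ ∃ u ∈ pend z, A u y}) (fun _ hy => hy.1)
      fun _ ⟨_, u, hu, hAu⟩ => ⟨u, Or.inr hu, hAu⟩
    exact (Set.ncard_insert_le _ _).trans hH
  calc {y | y < x ∧ ∃ u, A u y ∧ x < u}.ncard
      ≤ (⋃ z ∈ activeLevels T key x, bag z).ncard := Set.ncard_le_ncard hsub (Set.toFinite _)
    _ ≤ (activeLevels T key x).ncard * k := Set.ncard_biUnion_le_mul (Set.toFinite _) hbag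
    _ ≤ (Nat.log 2 (k - 1) + 1) * k :=
        Nat.mul_le_mul_right k (hT.isRootedTree_s11.ncard_activeLevels_le hkey hleaf x)

end Counting

section PathDecomposition

variable {V : Type*} [LinearOrder V] {A : V → V → Prop}

def cutBag (A : V → V → Prop) (x : V) : Set V :=
  {y | y = x ∨ (y < x ∧ ∃ u, A u y ∧ x ≤ u) ∨ (x < y ∧ ∃ u, A u y ∧ u ≤ x)}

theorem self_mem_cutBag (x : V) : x ∈ cutBag A x := Or.inl rfl

theorem mem_cutBag_of_rel {u v : V} (h : A u v) : v ∈ cutBag A u := by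
  rcases lt_trichotomy v u with hvu | rfl | huv
  · exact Or.inr (Or.inl ⟨hvu, u, h, le_rfl⟩)
  · exact self_mem_cutBag v
  · exact Or.inr (Or.inr ⟨huv, u, h, le_rfl⟩)

theorem mem_cutBag_of_le_of_le {a x b v : V} (hax : a ≤ x) (hxb : x ≤ b) (ha : v ∈ cutBag A a)
    (hb : v ∈ cutBag A b) : v ∈ cutBag A x := by
  rcases lt_trichotomy v x with hvx | rfl | hxv
  · rcases hb with rfl | ⟨-, u, hAu, hbu⟩ | ⟨hbv, -⟩
    · exact absurd hxb (not_le.mpr hvx)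
    · exact Or.inr (Or.inl ⟨hvx, u, hAu, hxb.trans hbu⟩)
    · exact absurd (hvx.trans_le hxb) hbv.not_gt
  · exact self_mem_cutBag v
  · rcases ha with rfl | ⟨hva, -⟩ | ⟨-, u, hAu, hua⟩
    · exact absurd hax (not_le.mpr hxv)
    · exact absurd (hxv.trans hva) (not_lt.mpr hax)
    · exact Or.inr (Or.inr ⟨hxv, u, hAu, hua.trans hax⟩)

theorem pwLE_UN_of_ncard_cutBag_le [Fintype V] {w : ℕ} (h : ∀ x, (cutBag A x).ncard ≤ w + 1) :
    pwLE (UN A) w := by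
  let σ : Fin (Fintype.card V) ≃o V := monoEquivOfFin V rfl
  refine ⟨Fintype.card V, fun i => (Set.toFinite (cutBag A (σ i))).toFinset, fun v => ?_,
    fun u v huv => ?_, fun i j l hij hjl v => ?_, fun i => ?_⟩
  · exact ⟨σ.symm v, by simpa using self_mem_cutBag v⟩
  · rcases huv.2 with h | h
    · exact ⟨σ.symm u, by simpa using ⟨self_mem_cutBag u, mem_cutBag_of_rel h⟩⟩
    · exact ⟨σ.symm v, by simpa using ⟨mem_cutBag_of_rel h, self_mem_cutBag v⟩⟩
  · simpa using mem_cutBag_of_le_of_le (σ.monotone hij) (σ.monotone hjl)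
  · rw [← Set.ncard_eq_toFinset_card _ (Set.toFinite _)]
    exact h (σ i)

end PathDecomposition

theorem ncard_cutBag_le {V : Type*} [Finite V] [LinearOrder V] {A T : V → V → Prop} {r : V}
    {key : V → ℕ} {k : ℕ} (hk : ∀ S ρ T, IsOutTree A S ρ T → treeLeaves S T < k)
    (hT : IsOutBranching A r T)
    (hkey : ∀ a b, key a < key b → treeLeaves (subtree T a) T ≤ treeLeaves (subtree T b) T)
    (hleaf : leavesCount T < k) (hlt : ∀ a b : V, a < b ↔ DfsBefore T key a b) (x : V) :
    (cutBag A x).ncard ≤ (Nat.log 2 (k - 1) + 3) * k + 1 := by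
  set out := {y | y ≠ x ∧ A x y}
  set back := {y | y < x ∧ ∃ u, A u y ∧ x < u}
  set fwd := {y | x < y ∧ ∃ u, A u y ∧ u ≤ x}
  have hsub : cutBag A x ⊆ insert x (out ∪ back ∪ fwd) := by
    rintro y (rfl | ⟨hyx, u, hAu, hxu⟩ | hy)
    · exact Set.mem_insert y _
    · rcases hxu.eq_or_lt with rfl | hxu
      · exact Or.inr (Or.inl (Or.inl ⟨hyx.ne, hAu⟩))
      · exact Or.inr (Or.inl (Or.inr ⟨hyx, u, hAu, hxu⟩))
    · exact Or.inr (Or.inr hy)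
  have hout : out.ncard < k := ncard_outNeighbors_lt hk x
  have hback : back.ncard ≤ (Nat.log 2 (k - 1) + 1) * k := ncard_backward_le hk hT hkey hleaf hlt x
  have hfwd : fwd.ncard < k := ncard_forward_lt hk hT hlt x
  calc (cutBag A x).ncard ≤ (insert x (out ∪ back ∪ fwd)).ncard :=
        Set.ncard_le_ncard hsub (Set.toFinite _)
    _ ≤ out.ncard + back.ncard + fwd.ncard + 1 := by
        grw [Set.ncard_insert_le, Set.ncard_union_le, Set.ncard_union_le]
    _ ≤ (Nat.log 2 (k - 1) + 3) * k + 1 := by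
        have : (Nat.log 2 (k - 1) + 3) * k = (Nat.log 2 (k - 1) + 1) * k + 2 * k := by ring
        omega

theorem exists_injective_key {V : Type*} [Finite V] (f : V → ℕ) :
    ∃ key : V → ℕ, Function.Injective key ∧ ∀ a b, key a < key b → f a ≤ f b := by
  obtain ⟨n, ⟨e⟩⟩ := Finite.exists_equiv_fin V
  have hdiv : ∀ c, (f c * n + e c) / n = f c := fun c => by
    rw [Nat.mul_comm, Nat.mul_add_div ((e c).pos), Nat.div_eq_of_lt (e c).isLt, add_zero]
  have hmod : ∀ c, (f c * n + e c) % n = e c := fun c => by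
    rw [Nat.mul_comm, Nat.mul_add_mod, Nat.mod_eq_of_lt (e c).isLt]
  refine ⟨fun c => f c * n + e c, fun a b hab => e.injective (Fin.ext ?_), fun a b hab => ?_⟩
  · simpa [hmod] using congrArg (· % n) hab
  · simpa [hdiv] using Nat.div_le_div_right (c := n) hab.le

theorem pwLE_UN_of_forall_leavesCount_lt {V : Type*} [Fintype V] {A : V → V → Prop} {k : ℕ}
    (hA : ∀ u v, ReflTransGen A u v) (hk : ∀ r T, IsOutBranching A r T → leavesCount T < k) :
    pwLE (UN A) ((Nat.log 2 (k - 1) + 3) * k) := by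
  rcases isEmpty_or_nonempty V with _ | ⟨⟨r⟩⟩
  · exact ⟨0, fun _ => ∅, isEmptyElim, fun u => isEmptyElim u, fun i => i.elim0, fun i => i.elim0⟩
  obtain ⟨T, hT, -⟩ := (isOutTree_singleton r).exists_outBranching hA
  obtain ⟨key, hinj, hkey⟩ := exists_injective_key fun c => treeLeaves (subtree T c) T
  have := hT.isRootedTree_s11.isStrictTotalOrder_dfsBefore hinj
  let : LinearOrder V := @linearOrderOfSTO V (DfsBefore T key) _ (Classical.decRel _)
  exact pwLE_UN_of_ncard_cutBag_le fun x =>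
    ncard_cutBag_le (fun _ _ _ h => h.treeLeaves_lt hA hk) hT hkey (hk r T hT)
      (fun _ _ => Iff.rfl) x

theorem cast_log_add_three_mul_le {k : ℕ} (hk : 2 ≤ k) :
    (((Nat.log 2 (k - 1) + 3) * k : ℕ) : ℝ) ≤ 8 * k * Real.log k := by
  set L := Nat.log 2 (k - 1)
  have hpow : 2 ^ L ≤ k := (Nat.pow_log_le_self 2 (by omega)).trans (Nat.sub_le k 1)
  have hL : (L : ℝ) * Real.log 2 ≤ Real.log k := by
    rw [← Real.log_pow]
    exact Real.log_le_log (by positivity) (by exact_mod_cast hpow)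
  have hlog2 : (1 / 2 : ℝ) < Real.log 2 := lt_trans (by norm_num) Real.log_two_gt_d9
  have hlogk : Real.log 2 ≤ Real.log k := Real.log_le_log two_pos (by exact_mod_cast hk)
  have hsum : (L : ℝ) + 3 ≤ 8 * Real.log k := by nlinarith [(L.cast_nonneg : (0 : ℝ) ≤ L)]
  push_cast
  nlinarith [(k.cast_nonneg : (0 : ℝ) ≤ k)]

/-- There is a constant `c > 0` such that every strongly connected digraph either has an
out-branching with at least `k` leaves, or the pathwidth of its underlying graph is at
most `c · k · log k`. -/
theorem stmt_11 :
    ∃ c : ℝ, 0 < c ∧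
      ∀ (V : Type) (_ : Fintype V) (A : V → V → Prop) (k : ℕ), 2 ≤ k →
        (∀ u v : V, Relation.ReflTransGen A u v) →
        ((∃ (r : V) (T : V → V → Prop), IsOutBranching A r T ∧ k ≤ leavesCount T) ∨
          ∃ w : ℕ, pwLE (UN A) w ∧ (w : ℝ) ≤ c * k * Real.log k) := by
  refine ⟨8, by norm_num, fun V _ A k hk hA => ?_⟩
  by_cases hleaves : ∃ r T, IsOutBranching A r T ∧ k ≤ leavesCount T
  · exact Or.inl hleaves
  push Not at hleaves
  exact Or.inr ⟨_, pwLE_UN_of_forall_leavesCount_lt hA hleaves, cast_log_add_three_mul_le hk⟩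
end
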